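/- arXiv:0810.2230 — 6 statements merged into one kernel-verified Lean document; each statement's English description precedes it below -/
import Mathlib

section
/- Let h : [0,∞) → ℝ be a positive function with h(s) → ∞ as s → ∞. If u is continuous on the closed upper half-plane {z ∈ ℂ : Im z ≥ 0}, holomorphic on the open upper half-plane {Im z > 0}, and satisfies ∫_{{Im z > 0}} e^{(Im z)·h(Im z)} |u(z)|² dμ(z) < ∞, then u is identically zero. -/
open MeasureTheory

open Real Set

lemma circle_mvp {f : ℂ → ℂ} {c : ℂ} {r : ℝ} (hr : 0 < r)
    (hd : DiffContOnCl ℂ f (Metric.ball c r)) :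
    (2 * π) * ‖f c‖ ≤ ∫ θ in (0:ℝ)..(2 * π), ‖f (circleMap c r θ)‖ := by
  have key := hd.circleIntegral_sub_inv_smul (Metric.mem_ball_self hr)
  have h1 : (∮ z in C(c, r), (z - c)⁻¹ • f z)
      = ∫ θ in (0:ℝ)..(2 * π), Complex.I * f (circleMap c r θ) := by
    rw [circleIntegral]
    refine intervalIntegral.integral_congr fun θ _ => ?_
    have hne : circleMap 0 r θ ≠ 0 := by
      simpa using circleMap_ne_center (c := (0:ℂ)) hr.ne' (θ := θ)
    rw [deriv_circleMap, circleMap_sub_center, smul_eq_mul, smul_eq_mul]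
    field_simp
  have h2 : ∫ θ in (0:ℝ)..(2 * π), Complex.I * f (circleMap c r θ)
      = Complex.I * ∫ θ in (0:ℝ)..(2 * π), f (circleMap c r θ) := by
    simp [intervalIntegral.integral_const_mul]
  have h3 : (∫ θ in (0:ℝ)..(2 * π), f (circleMap c r θ)) = ((2 * π : ℝ) : ℂ) * f c := by
    have := key
    rw [h1, h2] at this
    have hI : (Complex.I : ℂ) ≠ 0 := Complex.I_ne_zero
    apply mul_left_cancel₀ hI
    rw [this, smul_eq_mul]
    push_cast
    ring
  calc (2 * π) * ‖f c‖ = ‖((2 * π : ℝ) : ℂ) * f c‖ := by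
        rw [norm_mul, Complex.norm_real, Real.norm_eq_abs, abs_of_pos Real.two_pi_pos]
    _ = ‖∫ θ in (0:ℝ)..(2 * π), f (circleMap c r θ)‖ := by rw [h3]
    _ ≤ _ := intervalIntegral.norm_integral_le_integral_norm Real.two_pi_pos.le

lemma submean {v : ℂ → ℂ} {c : ℂ} {V : Set ℂ} (hV : IsOpen V)
    (hcb : Metric.closedBall c 1 ⊆ V)
    (hc : ContinuousOn v V) (hd : DifferentiableOn ℂ v (Metric.ball c 1)) :
    π / 8 * ‖v c‖ ^ 2 ≤ ∫ w in Metric.closedBall c 1, ‖v w‖ ^ 2 := by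
  set φ : ℂ → ℝ := fun w => max 0 (1 - ‖w‖) with hφ
  have hφcont : Continuous φ := continuous_const.max (continuous_const.sub continuous_norm)
  have hφ0 : ∀ w : ℂ, 1 ≤ ‖w‖ → φ w = 0 := fun w hw => max_eq_left (by linarith)
  have hφ1 : ∀ w : ℂ, φ w ≤ 1 := fun w => max_le zero_le_one (by
    have := norm_nonneg w; linarith)
  have hφnn : ∀ w : ℂ, 0 ≤ φ w := fun w => le_max_left _ _
  have hφhalf : ∀ w : ℂ, ‖w‖ ≤ 1/2 → 1/2 ≤ φ w := fun w hw =>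
    le_max_of_le_right (by linarith)
  set f₀ : ℂ → ℝ := fun w => φ w * ‖v (c + w)‖ ^ 2 with hf₀
  have haddcont : Continuous (fun w : ℂ => c + w) := by fun_prop
  have hvc : ContinuousOn (fun w : ℂ => ‖v (c + w)‖ ^ 2) {w : ℂ | c + w ∈ V} :=
    ((hc.comp haddcont.continuousOn (fun w hw => hw)).norm.pow 2)
  -- continuity of f₀
  have hWopen : IsOpen {w : ℂ | c + w ∈ V} := hV.preimage haddcont
  have hWball : Metric.closedBall (0:ℂ) 1 ⊆ {w : ℂ | c + w ∈ V} := by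
    intro w hw
    apply hcb
    simp only [Metric.mem_closedBall, dist_eq_norm] at hw ⊢
    simpa using hw
  have hf₀cont : Continuous f₀ := by
    rw [continuous_iff_continuousAt]
    intro x
    by_cases hx : c + x ∈ V
    · exact (hφcont.continuousOn.mul hvc).continuousAt (hWopen.mem_nhds hx)
    · have hx1 : 1 < ‖x‖ := by
        by_contra hle
        exact hx (hWball (by simpa [Metric.mem_closedBall] using not_lt.1 hle))
      have hev : f₀ =ᶠ[nhds x] 0 := by
        filter_upwards [(isOpen_lt continuous_const continuous_norm).mem_nhds
          (by simpa using hx1 : x ∈ {w : ℂ | 1 < ‖w‖})] with w hw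
        simp only [hf₀, Pi.zero_apply, hφ0 w (le_of_lt hw), zero_mul]
      exact ContinuousAt.congr continuousAt_const hev.symm
  -- polar coordinates identity
  have polar := Complex.integral_comp_polarCoord_symm f₀
  -- upper bound for the full-plane integral of f₀
  have hvint : IntegrableOn (fun w => ‖v (c + w)‖ ^ 2) (Metric.closedBall (0:ℂ) 1) :=
    (hvc.mono hWball).integrableOn_compact (isCompact_closedBall _ _)
  have hupper : (∫ w, f₀ w) ≤ ∫ w in Metric.closedBall c 1, ‖v w‖ ^ 2 := by
    have e1 : (∫ w, f₀ w) = ∫ w in Metric.closedBall (0:ℂ) 1, f₀ w := by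
      rw [setIntegral_eq_integral_of_forall_compl_eq_zero]
      intro w hw
      have : 1 < ‖w‖ := by simpa [Metric.mem_closedBall] using hw
      simp [hf₀, hφ0 w this.le]
    have e2 : (∫ w in Metric.closedBall (0:ℂ) 1, f₀ w)
        ≤ ∫ w in Metric.closedBall (0:ℂ) 1, ‖v (c + w)‖ ^ 2 := by
      refine setIntegral_mono_on (hf₀cont.continuousOn.integrableOn_compact (isCompact_closedBall _ _))
        hvint measurableSet_closedBall ?_
      intro w _
      calc φ w * ‖v (c + w)‖ ^ 2 ≤ 1 * ‖v (c + w)‖ ^ 2 := by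
            exact mul_le_mul_of_nonneg_right (hφ1 w) (by positivity)
        _ = _ := one_mul _
    have e3 : (∫ w in Metric.closedBall (0:ℂ) 1, ‖v (c + w)‖ ^ 2)
        = ∫ w in Metric.closedBall c 1, ‖v w‖ ^ 2 := by
      rw [← integral_indicator measurableSet_closedBall,
        ← integral_indicator measurableSet_closedBall]
      rw [← integral_add_left_eq_self
        (fun w => Set.indicator (Metric.closedBall c 1) (fun w => ‖v w‖ ^ 2) w) c]
      congr 1
      ext w
      have hmem : w ∈ Metric.closedBall (0:ℂ) 1 ↔ c + w ∈ Metric.closedBall c 1 := by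
        simp [Metric.mem_closedBall, dist_eq_norm]
      by_cases hw : w ∈ Metric.closedBall (0:ℂ) 1
      · rw [Set.indicator_of_mem hw, Set.indicator_of_mem (hmem.1 hw)]
      · rw [Set.indicator_of_notMem hw, Set.indicator_of_notMem (fun hh => hw (hmem.2 hh))]
    calc (∫ w, f₀ w) = _ := e1
      _ ≤ _ := e2
      _ = _ := e3
  
  -- lower bound via polar coordinates
  set F : ℝ × ℝ → ℝ := fun p => p.1 • f₀ (Complex.polarCoord.symm p) with hF
  have hsymmc : Continuous (fun p : ℝ × ℝ => Complex.polarCoord.symm p) := by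
    simp only [Complex.polarCoord_symm_apply]
    fun_prop
  have hFcont : Continuous F := continuous_fst.smul (hf₀cont.comp hsymmc)
  have hnorm_symm : ∀ p : ℝ × ℝ, ‖Complex.polarCoord.symm p‖ = |p.1| := fun p => by
    exact Complex.norm_polarCoord_symm p
  have s1 : (∫ p in polarCoord.target, F p)
      = ∫ p in Ioo (0:ℝ) 1 ×ˢ Ioo (-π) π, F p := by
    apply setIntegral_eq_of_subset_of_forall_diff_eq_zero
      polarCoord.open_target.measurableSet
    · rw [polarCoord_target]
      exact Set.prod_mono Ioo_subset_Ioi_self subset_rfl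
    · rintro p ⟨hpt, hps⟩
      rw [polarCoord_target] at hpt
      have hp1 : 0 < p.1 := hpt.1
      have hp2 : p.2 ∈ Ioo (-π) π := hpt.2
      have h1le : 1 ≤ p.1 := by
        by_contra hlt
        exact hps (Set.mk_mem_prod ⟨hp1, not_le.1 hlt⟩ hp2)
      have hz : f₀ (Complex.polarCoord.symm p) = 0 := by
        have h1 : (1:ℝ) ≤ ‖Complex.polarCoord.symm p‖ := by
          rw [hnorm_symm]
          exact h1le.trans (le_abs_self _)
        show φ _ * _ = 0
        rw [hφ0 _ h1, zero_mul]
      show p.1 • f₀ (Complex.polarCoord.symm p) = 0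
      rw [hz, smul_zero]
  have hFint : IntegrableOn F (Ioo (0:ℝ) 1 ×ˢ Ioo (-π) π) := by
    apply IntegrableOn.mono_set
      (hFcont.continuousOn.integrableOn_compact (isCompact_Icc.prod isCompact_Icc))
    exact Set.prod_mono Ioo_subset_Icc_self Ioo_subset_Icc_self
  have hsub : Ioo (0:ℝ) (1/2) ×ˢ Ioo (-π) π ⊆ Ioo (0:ℝ) 1 ×ˢ Ioo (-π) π :=
    Set.prod_mono (Ioo_subset_Ioo_right (by norm_num)) subset_rfl
  have s2 : (∫ p in Ioo (0:ℝ) (1/2) ×ˢ Ioo (-π) π, F p)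
      ≤ ∫ p in Ioo (0:ℝ) 1 ×ˢ Ioo (-π) π, F p := by
    apply setIntegral_mono_set hFint
    · refine (ae_restrict_iff' (measurableSet_Ioo.prod measurableSet_Ioo)).2
        (Filter.Eventually.of_forall ?_)
      rintro p hp
      have : 0 ≤ p.1 := (hp.1.1).le
      have : 0 ≤ f₀ (Complex.polarCoord.symm p) := mul_nonneg (hφnn _) (by positivity)
      simp only [hF, smul_eq_mul]
      positivity
    · exact HasSubset.Subset.eventuallyLE hsub
  have hFint2 : IntegrableOn F (Ioo (0:ℝ) (1/2) ×ˢ Ioo (-π) π) := hFint.mono_set hsub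
  have hFprod : Integrable F
      ((volume.restrict (Ioo (0:ℝ) (1/2))).prod (volume.restrict (Ioo (-π) π))) := by
    rwa [Measure.prod_restrict, ← Measure.volume_eq_prod]
  have fub : (∫ p in Ioo (0:ℝ) (1/2) ×ˢ Ioo (-π) π, F p)
      = ∫ r in Ioo (0:ℝ) (1/2), ∫ θ in Ioo (-π) π, F (r, θ) := by
    rw [Measure.volume_eq_prod, setIntegral_prod F]
    rwa [← Measure.volume_eq_prod]
  
  -- inner bound
  have hsymm_eq : ∀ r θ : ℝ, Complex.polarCoord.symm (r, θ) = circleMap 0 r θ := by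
    intro r θ
    rw [Complex.polarCoord_symm_apply, circleMap, Complex.exp_mul_I]
    push_cast
    ring
  have hcm_add : ∀ r θ : ℝ, c + circleMap 0 r θ = circleMap c r θ := by
    intro r θ
    simp [circleMap]
  have s4 : ∀ r ∈ Ioo (0:ℝ) (1/2),
      r * (π * ‖v c‖ ^ 2) ≤ ∫ θ in Ioo (-π) π, F (r, θ) := by
    intro r hr
    have hr0 : 0 < r := hr.1
    have hr2 : r < 1/2 := hr.2
    have hball : Metric.ball c r ⊆ Metric.ball c 1 :=
      Metric.ball_subset_ball (by linarith)
    have hclos : closure (Metric.ball c r) ⊆ V := by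
      refine subset_trans Metric.closure_ball_subset_closedBall ?_
      refine subset_trans (Metric.closedBall_subset_closedBall (by linarith)) hcb
    have hd2 : DiffContOnCl ℂ (fun z => v z * v z) (Metric.ball c r) := by
      constructor
      · exact ((hd.mono hball).mul (hd.mono hball))
      · exact ((hc.mono hclos).mul (hc.mono hclos))
    have mvp := circle_mvp hr0 hd2
    have mvp2 : (2 * π) * ‖v c‖ ^ 2 ≤ ∫ θ in (0:ℝ)..(2 * π), ‖v (circleMap c r θ)‖ ^ 2 := by
      have e : ∀ θ : ℝ, ‖v (circleMap c r θ) * v (circleMap c r θ)‖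
          = ‖v (circleMap c r θ)‖ ^ 2 := fun θ => by rw [norm_mul, sq]
      calc (2 * π) * ‖v c‖ ^ 2 = (2 * π) * ‖v c * v c‖ := by rw [norm_mul, sq]
        _ ≤ ∫ θ in (0:ℝ)..(2 * π), ‖v (circleMap c r θ) * v (circleMap c r θ)‖ := mvp
        _ = _ := intervalIntegral.integral_congr fun θ _ => e θ
    -- periodicity: integral over Ioo (-π) π equals interval integral 0..2π
    have hper : Function.Periodic (fun θ : ℝ => ‖v (circleMap c r θ)‖ ^ 2) (2 * π) :=
      (periodic_circleMap c r).comp fun z => ‖v z‖ ^ 2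
    have e5 : (∫ θ in Ioo (-π) π, ‖v (circleMap c r θ)‖ ^ 2)
        = ∫ θ in (0:ℝ)..(2 * π), ‖v (circleMap c r θ)‖ ^ 2 := by
      have h2 : -π + 2 * π = π := by ring
      have h1 : (∫ θ in Ioo (-π) π, ‖v (circleMap c r θ)‖ ^ 2)
          = ∫ θ in (-π)..(-π + 2 * π), ‖v (circleMap c r θ)‖ ^ 2 := by
        rw [h2, intervalIntegral.integral_of_le (by linarith [pi_pos] : -π ≤ π),
          integral_Ioc_eq_integral_Ioo]
      rw [h1, hper.intervalIntegral_add_eq (-π) 0, zero_add]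
    -- continuity in θ
    have hcirc : Continuous fun θ : ℝ => circleMap c r θ := continuous_circleMap c r
    have hmem : ∀ θ : ℝ, circleMap c r θ ∈ V := fun θ => by
      apply hcb
      rw [Metric.mem_closedBall, dist_eq_norm, circleMap_sub_center,
        norm_circleMap_zero, abs_of_pos hr0]
      linarith
    have hvθ : Continuous fun θ : ℝ => ‖v (circleMap c r θ)‖ ^ 2 := by
      have : ContinuousOn v V := hc
      exact ((this.comp_continuous hcirc hmem).norm.pow 2)
    have hintθ1 : IntegrableOn (fun θ : ℝ => f₀ (circleMap 0 r θ)) (Ioo (-π) π) := by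
      apply IntegrableOn.mono_set
        ((hf₀cont.comp (continuous_circleMap 0 r)).continuousOn.integrableOn_compact
          isCompact_Icc)
      exact Ioo_subset_Icc_self
    have hintθ2 : IntegrableOn (fun θ : ℝ => (1/2) * ‖v (circleMap c r θ)‖ ^ 2)
        (Ioo (-π) π) := by
      apply IntegrableOn.mono_set
        ((continuous_const.mul hvθ).continuousOn.integrableOn_compact isCompact_Icc)
      exact Ioo_subset_Icc_self
    have hpoint : ∀ θ ∈ Ioo (-π) π,
        (1/2) * ‖v (circleMap c r θ)‖ ^ 2 ≤ f₀ (circleMap 0 r θ) := by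
      intro θ _
      have hnr : ‖circleMap 0 r θ‖ ≤ 1/2 := by
        rw [norm_circleMap_zero, abs_of_pos hr0]
        linarith
      have hφge : 1/2 ≤ φ (circleMap 0 r θ) := hφhalf _ hnr
      show _ ≤ φ (circleMap 0 r θ) * ‖v (c + circleMap 0 r θ)‖ ^ 2
      rw [hcm_add]
      exact mul_le_mul_of_nonneg_right hφge (by positivity)
    have hmono : (∫ θ in Ioo (-π) π, (1/2) * ‖v (circleMap c r θ)‖ ^ 2)
        ≤ ∫ θ in Ioo (-π) π, f₀ (circleMap 0 r θ) :=
      setIntegral_mono_on hintθ2 hintθ1 measurableSet_Ioo hpoint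
    have eF : (∫ θ in Ioo (-π) π, F (r, θ))
        = r * ∫ θ in Ioo (-π) π, f₀ (circleMap 0 r θ) := by
      have : ∀ θ : ℝ, F (r, θ) = r * f₀ (circleMap 0 r θ) := fun θ => by
        show r • f₀ (Complex.polarCoord.symm (r, θ)) = _
        rw [hsymm_eq, smul_eq_mul]
      simp_rw [this]
      exact integral_const_mul r _
    rw [eF]
    have hhalf : (∫ θ in Ioo (-π) π, (1/2) * ‖v (circleMap c r θ)‖ ^ 2)
        = (1/2) * ∫ θ in Ioo (-π) π, ‖v (circleMap c r θ)‖ ^ 2 :=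
      integral_const_mul _ _
    have : π * ‖v c‖ ^ 2 ≤ ∫ θ in Ioo (-π) π, f₀ (circleMap 0 r θ) := by
      calc π * ‖v c‖ ^ 2 = (1/2) * ((2 * π) * ‖v c‖ ^ 2) := by ring
        _ ≤ (1/2) * ∫ θ in (0:ℝ)..(2 * π), ‖v (circleMap c r θ)‖ ^ 2 := by
            apply mul_le_mul_of_nonneg_left mvp2 (by norm_num)
        _ = (1/2) * ∫ θ in Ioo (-π) π, ‖v (circleMap c r θ)‖ ^ 2 := by rw [e5]
        _ = _ := hhalf.symm
        _ ≤ _ := hmono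
    exact mul_le_mul_of_nonneg_left this hr0.le
  -- outer bound
  have hinner_int : IntegrableOn (fun r => ∫ θ in Ioo (-π) π, F (r, θ))
      (Ioo (0:ℝ) (1/2)) := hFprod.integral_prod_left
  have houter_int : IntegrableOn (fun r : ℝ => r * (π * ‖v c‖ ^ 2)) (Ioo (0:ℝ) (1/2)) := by
    apply IntegrableOn.mono_set
      ((continuous_id.mul continuous_const).continuousOn.integrableOn_compact isCompact_Icc)
    exact Ioo_subset_Icc_self
  have s5 : (∫ r in Ioo (0:ℝ) (1/2), r * (π * ‖v c‖ ^ 2))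
      ≤ ∫ r in Ioo (0:ℝ) (1/2), ∫ θ in Ioo (-π) π, F (r, θ) :=
    setIntegral_mono_on houter_int hinner_int measurableSet_Ioo s4
  have s6 : (∫ r in Ioo (0:ℝ) (1/2), r * (π * ‖v c‖ ^ 2)) = π / 8 * ‖v c‖ ^ 2 := by
    rw [integral_mul_const]
    have : (∫ r in Ioo (0:ℝ) (1/2), r) = 1/8 := by
      rw [← integral_Ioc_eq_integral_Ioo,
        ← intervalIntegral.integral_of_le (by norm_num : (0:ℝ) ≤ 1/2)]
      rw [integral_id]
      norm_num
    rw [this]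
    ring
  calc π / 8 * ‖v c‖ ^ 2 = _ := s6.symm
    _ ≤ _ := s5
    _ = ∫ p in Ioo (0:ℝ) (1/2) ×ˢ Ioo (-π) π, F p := fub.symm
    _ ≤ ∫ p in Ioo (0:ℝ) 1 ×ˢ Ioo (-π) π, F p := s2
    _ = ∫ p in polarCoord.target, F p := s1.symm
    _ = ∫ w, f₀ w := polar
    _ ≤ _ := hupper

/-- Paper's Proposition 4.1 (`nonex.half`): if `h` is positive on `[0,∞)` and tends to
infinity, then any function continuous on the closed upper half-plane, holomorphic on the
open upper half-plane, and square integrable there with weight `e^{x₂ h(x₂)}`, vanishes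
identically on the closed upper half-plane. -/
theorem no_nontrivial_weighted_L2_holomorphic_on_halfplane
    (h : ℝ → ℝ) (hpos : ∀ s : ℝ, 0 ≤ s → 0 < h s)
    (hinf : Filter.Tendsto h Filter.atTop Filter.atTop)
    (u : ℂ → ℂ)
    (hcont : ContinuousOn u {z : ℂ | 0 ≤ z.im})
    (hhol : DifferentiableOn ℂ u {z : ℂ | 0 < z.im})
    (hint : ∫⁻ z in {z : ℂ | 0 < z.im},
        ENNReal.ofReal (Real.exp (z.im * h z.im) * ‖u z‖ ^ 2) < ⊤) :
    ∀ z : ℂ, 0 ≤ z.im → u z = 0 := by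
  set S : Set ℂ := {z : ℂ | 0 < z.im} with hS
  have hSopen : IsOpen S := isOpen_lt continuous_const Complex.continuous_im
  set T : ENNReal := ∫⁻ z in S,
    ENNReal.ofReal (Real.exp (z.im * h z.im) * ‖u z‖ ^ 2) with hT
  have hTlt : T < ⊤ := hint
  have hcont' : ContinuousOn u S := hcont.mono (fun z hz => by
    show (0:ℝ) ≤ z.im
    exact le_of_lt hz)
  -- Step 1: pointwise superexponential decay on {im ≥ 2}
  have key : ∀ a : ℝ, 0 ≤ a → ∃ K : ℝ, 0 ≤ K ∧
      ∀ c : ℂ, 2 ≤ c.im → ‖u c‖ ≤ K * Real.exp (-a * c.im) := by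
    intro a ha
    obtain ⟨Y', hY'⟩ := Filter.eventually_atTop.mp (hinf.eventually_ge_atTop (2 * a))
    set Y : ℝ := max Y' 0 with hYdef
    have hYnn : (0:ℝ) ≤ Y := le_max_right _ _
    have hY : ∀ s : ℝ, Y ≤ s → 2 * a ≤ h s := fun s hs =>
      hY' s ((le_max_left _ _).trans hs)
    set K0 : ℝ := Real.exp (2 * a * Y + 2 * a) with hK0
    have hK0pos : 0 < K0 := Real.exp_pos _
    have hTnn : 0 ≤ T.toReal := ENNReal.toReal_nonneg
    refine ⟨Real.sqrt (8 / π * (K0 * T.toReal)), Real.sqrt_nonneg _, ?_⟩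
    intro c hc
    have hcb : Metric.closedBall c 1 ⊆ S := by
      intro w hw
      have hd1 : ‖w - c‖ ≤ 1 := by rwa [Metric.mem_closedBall, dist_eq_norm] at hw
      have h1 : |w.im - c.im| ≤ 1 := by
        calc |w.im - c.im| = |(w - c).im| := by rw [Complex.sub_im]
          _ ≤ ‖w - c‖ := Complex.abs_im_le_norm (w - c)
          _ ≤ 1 := hd1
      have h2 := (abs_le.1 h1).1
      show 0 < w.im
      linarith
    have him1 : ∀ w ∈ Metric.closedBall c 1, c.im - 1 ≤ w.im ∧ w.im ≤ c.im + 1 := by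
      intro w hw
      have hd1 : ‖w - c‖ ≤ 1 := by rwa [Metric.mem_closedBall, dist_eq_norm] at hw
      have h1 : |w.im - c.im| ≤ 1 := by
        calc |w.im - c.im| = |(w - c).im| := by rw [Complex.sub_im]
          _ ≤ ‖w - c‖ := Complex.abs_im_le_norm (w - c)
          _ ≤ 1 := hd1
      obtain ⟨h2, h3⟩ := abs_le.1 h1
      constructor <;> linarith
    have hmean := submean hSopen hcb hcont'
      (hhol.mono (fun w hw => hcb (Metric.ball_subset_closedBall hw)))
    -- bound the ball integral via the weighted integral
    have hgcont : ContinuousOn (fun w => ‖u w‖ ^ 2) (Metric.closedBall c 1) :=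
      ((hcont'.mono hcb).norm.pow 2)
    have hgm : AEStronglyMeasurable (fun w => ‖u w‖ ^ 2)
        (volume.restrict (Metric.closedBall c 1)) :=
      hgcont.aestronglyMeasurable measurableSet_closedBall
    have heq : (∫ w in Metric.closedBall c 1, ‖u w‖ ^ 2)
        = (∫⁻ w in Metric.closedBall c 1, ENNReal.ofReal (‖u w‖ ^ 2)).toReal :=
      integral_eq_lintegral_of_nonneg_ae (Filter.Eventually.of_forall fun w => by positivity) hgm
    set E : ℝ := Real.exp (-(2 * a) * c.im) with hE
    have hEpos : 0 < E := Real.exp_pos _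
    have hpt : ∀ w ∈ Metric.closedBall c 1,
        ENNReal.ofReal (‖u w‖ ^ 2) ≤ ENNReal.ofReal (K0 * E *
          (Real.exp (w.im * h w.im) * ‖u w‖ ^ 2)) := by
      intro w hw
      apply ENNReal.ofReal_le_ofReal
      have hwim : 0 < w.im := hcb hw
      obtain ⟨hlo, hhi⟩ := him1 w hw
      have habs : ‖u w‖ ^ 2 = ‖u w‖ ^ 2 := rfl
      rw [habs]
      have hcoef : 1 ≤ K0 * E * Real.exp (w.im * h w.im) := by
        rw [hK0, hE, ← Real.exp_add, ← Real.exp_add, ← Real.exp_zero]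
        apply Real.exp_le_exp.2
        rcases le_or_gt Y w.im with hcase | hcase
        · have hhy := hY _ hcase
          have h1 : 2 * a * w.im ≤ w.im * h w.im := by nlinarith
          nlinarith
        · have hhy : 0 < h w.im := hpos _ hwim.le
          have h1 : 0 ≤ w.im * h w.im := by positivity
          nlinarith
      calc ‖u w‖ ^ 2 = 1 * ‖u w‖ ^ 2 := (one_mul _).symm
        _ ≤ (K0 * E * Real.exp (w.im * h w.im)) * ‖u w‖ ^ 2 :=
            mul_le_mul_of_nonneg_right hcoef (by positivity)
        _ = K0 * E * (Real.exp (w.im * h w.im) * ‖u w‖ ^ 2) := by ring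
    have hlin : (∫⁻ w in Metric.closedBall c 1, ENNReal.ofReal (‖u w‖ ^ 2))
        ≤ ENNReal.ofReal (K0 * E) * T := by
      calc (∫⁻ w in Metric.closedBall c 1, ENNReal.ofReal (‖u w‖ ^ 2))
          ≤ ∫⁻ w in Metric.closedBall c 1, ENNReal.ofReal (K0 * E *
              (Real.exp (w.im * h w.im) * ‖u w‖ ^ 2)) :=
            lintegral_mono_ae ((ae_restrict_iff' measurableSet_closedBall).2
              (Filter.Eventually.of_forall hpt))
        _ = ∫⁻ w in Metric.closedBall c 1, ENNReal.ofReal (K0 * E) *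
              ENNReal.ofReal (Real.exp (w.im * h w.im) * ‖u w‖ ^ 2) := by
            apply lintegral_congr
            intro w
            rw [ENNReal.ofReal_mul (by positivity)]
        _ = ENNReal.ofReal (K0 * E) * ∫⁻ w in Metric.closedBall c 1,
              ENNReal.ofReal (Real.exp (w.im * h w.im) * ‖u w‖ ^ 2) :=
            lintegral_const_mul' _ _ ENNReal.ofReal_ne_top
        _ ≤ ENNReal.ofReal (K0 * E) * T := by
            apply mul_le_mul_right
            rw [hT]
            exact lintegral_mono' (Measure.restrict_mono hcb le_rfl) le_rfl
    have hfin : ENNReal.ofReal (K0 * E) * T ≠ ⊤ :=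
      ENNReal.mul_ne_top ENNReal.ofReal_ne_top hTlt.ne
    have hball : (∫ w in Metric.closedBall c 1, ‖u w‖ ^ 2) ≤ K0 * E * T.toReal := by
      rw [heq]
      calc (∫⁻ w in Metric.closedBall c 1, ENNReal.ofReal (‖u w‖ ^ 2)).toReal
          ≤ (ENNReal.ofReal (K0 * E) * T).toReal := ENNReal.toReal_mono hfin hlin
        _ = K0 * E * T.toReal := by
            rw [ENNReal.toReal_mul, ENNReal.toReal_ofReal (by positivity)]
    have hπ : (0:ℝ) < π := pi_pos
    have hsq : ‖u c‖ ^ 2 ≤ 8 / π * (K0 * T.toReal) * E := by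
      have h8 : (0:ℝ) < 8 / π := by positivity
      have hh := mul_le_mul_of_nonneg_left (hmean.trans hball) h8.le
      calc ‖u c‖ ^ 2 = 8 / π * (π / 8 * ‖u c‖ ^ 2) := by
            field_simp
        _ ≤ 8 / π * (K0 * E * T.toReal) := hh
        _ = 8 / π * (K0 * T.toReal) * E := by ring
    have hxnn : (0:ℝ) ≤ ‖u c‖ := norm_nonneg _
    have hBnn : (0:ℝ) ≤ 8 / π * (K0 * T.toReal) := by positivity
    calc ‖u c‖ = Real.sqrt (‖u c‖ ^ 2) := (Real.sqrt_sq hxnn).symm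
      _ ≤ Real.sqrt (8 / π * (K0 * T.toReal) * E) := Real.sqrt_le_sqrt hsq
      _ = Real.sqrt (8 / π * (K0 * T.toReal)) * Real.sqrt E := Real.sqrt_mul hBnn _
      _ = Real.sqrt (8 / π * (K0 * T.toReal)) * Real.exp (-a * c.im) := by
          congr 1
          have : E = (Real.exp (-a * c.im)) ^ 2 := by
            rw [hE, sq, ← Real.exp_add]
            ring_nf
          rw [this, Real.sqrt_sq (Real.exp_nonneg _)]
  -- Step 2: Phragmen-Lindelof
  obtain ⟨K₀, hK₀nn, hK₀⟩ := key 0 le_rfl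
  have hbound0 : ∀ c : ℂ, 2 ≤ c.im → ‖u c‖ ≤ K₀ := by
    intro c hc
    have := hK₀ c hc
    simpa using this
  set f : ℂ → ℂ := fun w => u (w * Complex.I + 2 * Complex.I) with hf
  have hmap : ∀ w : ℂ, (w * Complex.I + 2 * Complex.I).im = w.re + 2 := by
    intro w
    simp [Complex.add_im, Complex.mul_I_im]
  have hdiff_aff : Differentiable ℂ (fun w : ℂ => w * Complex.I + 2 * Complex.I) := by
    fun_prop
  have hd : DiffContOnCl ℂ f {w : ℂ | 0 < w.re} := by
    constructor
    · apply DifferentiableOn.comp hhol hdiff_aff.differentiableOn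
      intro w hw
      show (0:ℝ) < _
      rw [hmap]
      have : (0:ℝ) < w.re := hw
      linarith
    · have hcl : closure {w : ℂ | 0 < w.re} = {w : ℂ | 0 ≤ w.re} :=
        Complex.closure_setOf_lt_re 0
      rw [hcl]
      apply ContinuousOn.comp hcont hdiff_aff.continuous.continuousOn
      intro w hw
      show (0:ℝ) ≤ _
      rw [hmap]
      have : (0:ℝ) ≤ w.re := hw
      linarith
  have hexp : ∃ cc < (2:ℝ), ∃ B : ℝ,
      f =O[Bornology.cobounded ℂ ⊓ Filter.principal {z : ℂ | 0 < z.re}]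
      fun z => Real.exp (B * ‖z‖ ^ cc) := by
    refine ⟨1, by norm_num, 0, ?_⟩
    rw [Asymptotics.isBigO_iff]
    refine ⟨K₀, ?_⟩
    apply Filter.Eventually.filter_mono inf_le_right
    rw [Filter.eventually_principal]
    intro w hw
    have h2 : 2 ≤ (w * Complex.I + 2 * Complex.I).im := by
      rw [hmap]
      have : (0:ℝ) < w.re := hw
      linarith
    calc ‖f w‖ ≤ K₀ := hbound0 _ h2
      _ = K₀ * ‖Real.exp (0 * ‖w‖ ^ (1:ℝ))‖ := by simp
  have hre : Asymptotics.SuperpolynomialDecay Filter.atTop Real.exp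
      fun x : ℝ => ‖f x‖ := by
    intro n
    obtain ⟨K, hKnn, hK⟩ := key (n + 1) (by positivity)
    have hub : ∀ x : ℝ, 0 ≤ x → Real.exp x ^ n * ‖f (x:ℂ)‖ ≤ K * Real.exp (-x) := by
      intro x hx
      have h2 : 2 ≤ ((x:ℂ) * Complex.I + 2 * Complex.I).im := by
        rw [hmap, Complex.ofReal_re]
        linarith
      have hb := hK _ h2
      rw [hmap, Complex.ofReal_re] at hb
      calc Real.exp x ^ n * ‖f (x:ℂ)‖
          ≤ Real.exp x ^ n * (K * Real.exp (-(n + 1) * (x + 2))) :=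
            mul_le_mul_of_nonneg_left hb (by positivity)
        _ = K * (Real.exp ((n:ℝ) * x) * Real.exp (-(n + 1) * (x + 2))) := by
            rw [← Real.exp_nat_mul]
            ring
        _ = K * Real.exp ((n:ℝ) * x + -(n + 1) * (x + 2)) := by rw [← Real.exp_add]
        _ ≤ K * Real.exp (-x) := by
            apply mul_le_mul_of_nonneg_left _ hKnn
            apply Real.exp_le_exp.2
            have hn : (0:ℝ) ≤ (n:ℝ) := Nat.cast_nonneg n
            nlinarith
    have hlow : ∀ x : ℝ, 0 ≤ Real.exp x ^ n * ‖f (x:ℂ)‖ := fun x => by positivity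
    apply squeeze_zero' (Filter.Eventually.of_forall hlow)
      ((Filter.eventually_ge_atTop (0:ℝ)).mono hub)
    have : Filter.Tendsto (fun x : ℝ => Real.exp (-x)) Filter.atTop (nhds 0) :=
      Real.tendsto_exp_neg_atTop_nhds_zero
    simpa using this.const_mul K
  have him : ∃ C, ∀ x : ℝ, ‖f ((x:ℂ) * Complex.I)‖ ≤ C := by
    refine ⟨K₀, fun x => ?_⟩
    apply hbound0
    rw [hmap, Complex.mul_I_re]
    simp
  have hzero := PhragmenLindelof.eq_zero_on_right_half_plane_of_superexponential_decay
    hd hexp hre him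
  have huzero2 : ∀ z : ℂ, 2 ≤ z.im → u z = 0 := by
    intro z hz
    have hw : ((-Complex.I) * z - 2) * Complex.I + 2 * Complex.I = z := by
      have hI : Complex.I * Complex.I = -1 := Complex.I_mul_I
      linear_combination (-z : ℂ) * hI
    have hre' : ((-Complex.I) * z - 2).re = z.im - 2 := by
      simp [Complex.sub_re, Complex.mul_re]
    have hmem : ((-Complex.I) * z - 2) ∈ {w : ℂ | 0 ≤ w.re} := by
      show (0:ℝ) ≤ _
      rw [hre']
      linarith
    have := hzero hmem
    simp only [hf, Pi.zero_apply] at this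
    rwa [hw] at this
  -- Step 3: identity theorem
  have hanalytic : AnalyticOnNhd ℂ u S := hhol.analyticOnNhd hSopen
  have hpre : IsPreconnected S := (convex_halfSpace_im_gt 0).isPreconnected
  have h3mem : (3 * Complex.I : ℂ) ∈ S := by
    show (0:ℝ) < (3 * Complex.I).im
    simp
  have hev : u =ᶠ[nhds (3 * Complex.I)] 0 := by
    have hopen2 : IsOpen {z : ℂ | 2 < z.im} :=
      isOpen_lt continuous_const Complex.continuous_im
    have h3mem2 : (3 * Complex.I : ℂ) ∈ {z : ℂ | 2 < z.im} := by
      show (2:ℝ) < (3 * Complex.I).im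
      simp
      norm_num
    filter_upwards [hopen2.mem_nhds h3mem2] with w hw
    exact huzero2 w (le_of_lt hw)
  have hEq : Set.EqOn u 0 S :=
    hanalytic.eqOn_zero_of_preconnected_of_eventuallyEq_zero hpre h3mem hev
  -- Step 4: boundary
  intro z hz
  rcases hz.lt_or_eq with hlt | heq0
  · exact hEq hlt
  · have hzcl : z ∈ closure S := by
      rw [hS, Complex.closure_setOf_lt_im]
      exact hz
    haveI : (nhdsWithin z S).NeBot := mem_closure_iff_nhdsWithin_neBot.1 hzcl
    have hA : Filter.Tendsto u (nhdsWithin z S) (nhds (u z)) :=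
      ((hcont z hz).mono (fun w hw => by
        show (0:ℝ) ≤ w.im
        exact le_of_lt hw))
    have hB : Filter.Tendsto u (nhdsWithin z S) (nhds 0) := by
      apply Filter.Tendsto.congr' _ tendsto_const_nhds
      filter_upwards [self_mem_nhdsWithin] with w hw
      exact (hEq hw).symm
    exact tendsto_nhds_unique hA hB
end

section
/- Let b₁ < 0 and define F : ℂ → ℝ by F(z) = b₁ (Im z)² if Im z ≥ 0 and F(z) = (Im z)² if Im z < 0. If u is an entire function with ∫_ℂ |u(z)|² e^{2F(z)} dμ(z) < ∞, then u ≡ 0; likewise, if u is an entire function with ∫_ℂ |u(z)|² e^{−2F(z)} dμ(z) < ∞, then u ≡ 0. -/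
open MeasureTheory

section Aux
open Real Set Filter Topology Function

lemma circle_mean (f : ℂ → ℂ) (hf : Differentiable ℂ f) (c : ℂ) {r : ℝ} (hr : 0 < r) :
    (∫ θ in (0)..(2*π), f (circleMap c r θ)) = (2*π : ℝ) • f c := by
  have h := Complex.circleIntegral_sub_center_inv_smul_of_differentiable_on_off_countable hr
    (f := f) (c := c) (s := ∅) Set.countable_empty (hf.continuous.continuousOn)
    (fun z _ => hf z)
  rw [circleIntegral] at h
  have h2 : ∀ θ : ℝ, (deriv (circleMap c r) θ) • (circleMap c r θ - c)⁻¹ • f (circleMap c r θ)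
      = Complex.I * f (circleMap c r θ) := by
    intro θ
    rw [deriv_circleMap, circleMap_sub_center]
    have hne : circleMap 0 r θ ≠ 0 := by simpa using (circleMap_eq_center_iff (c := 0) (R := r) (θ := θ)).not.mpr hr.ne'
    field_simp
    simp only [smul_eq_mul, one_div]
    rw [mul_comm (circleMap 0 r θ) Complex.I, mul_assoc, ← mul_assoc (circleMap 0 r θ), mul_inv_cancel₀ hne, one_mul]
  simp only [h2] at h
  rw [intervalIntegral.integral_const_mul] at h
  refine mul_left_cancel₀ Complex.I_ne_zero (h.trans ?_)
  simp only [smul_eq_mul, Complex.real_smul]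
  push_cast
  ring

lemma circle_sq_bound (u : ℂ → ℂ) (hu : Differentiable ℂ u) (c : ℂ) {r : ℝ} (hr : 0 < r) :
    ENNReal.ofReal (2*π*‖u c‖^2) ≤ ∫⁻ θ in Ioo (-π) π, ENNReal.ofReal (‖u (circleMap c r θ)‖^2) := by
  set f : ℂ → ℂ := fun z => u z * u z with hfdef
  have hf : Differentiable ℂ f := hu.mul hu
  have h1 := circle_mean f hf c hr
  have hper : Periodic (fun θ => f (circleMap c r θ)) (2*π) :=
    (periodic_circleMap c r).comp f
  have h2 : (∫ θ in (-π)..(π), f (circleMap c r θ)) = (2*π : ℝ) • f c := by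
    have key := hper.intervalIntegral_add_eq (-π) 0
    rw [zero_add] at key
    have e : -π + 2*π = π := by ring
    rw [e] at key
    rw [key, h1]
  have hnorm : 2*π*‖u c‖^2 ≤ ∫ θ in Ioo (-π) π, ‖u (circleMap c r θ)‖^2 := by
    have h3 : ‖(2*π : ℝ) • f c‖ ≤ ∫ θ in (-π)..(π), ‖f (circleMap c r θ)‖ := by
      rw [← h2]
      exact intervalIntegral.norm_integral_le_integral_norm (by linarith [Real.pi_pos])
    have h4 : ‖(2*π : ℝ) • f c‖ = 2*π*‖u c‖^2 := by
      rw [norm_smul, Real.norm_eq_abs, abs_of_pos Real.two_pi_pos, hfdef]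
      simp only [norm_mul, sq]
    have h5 : ∀ θ : ℝ, ‖f (circleMap c r θ)‖ = ‖u (circleMap c r θ)‖^2 := by
      intro θ; rw [hfdef]; simp [norm_mul, sq]
    rw [h4] at h3
    simp only [h5] at h3
    rw [intervalIntegral.integral_of_le (by linarith [Real.pi_pos]),
      integral_Ioc_eq_integral_Ioo] at h3
    exact h3
  calc ENNReal.ofReal (2*π*‖u c‖^2)
      ≤ ENNReal.ofReal (∫ θ in Ioo (-π) π, ‖u (circleMap c r θ)‖^2) := ENNReal.ofReal_le_ofReal hnorm
    _ = ∫⁻ θ in Ioo (-π) π, ENNReal.ofReal (‖u (circleMap c r θ)‖^2) := by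
        rw [ofReal_integral_eq_lintegral_ofReal]
        · exact (((continuous_norm.comp (hu.continuous.comp (continuous_circleMap c r))).pow 2).continuousOn.integrableOn_Icc).mono_set Ioo_subset_Icc_self
        · exact Filter.Eventually.of_forall (fun θ => by positivity)

lemma det_polar (p : ℝ × ℝ) :
    (LinearMap.toContinuousLinearMap (Matrix.toLin (Module.Basis.finTwoProd ℝ) (Module.Basis.finTwoProd ℝ)
      !![cos p.2, -p.1 * sin p.2; sin p.2, p.1 * cos p.2])).det = p.1 := by
  conv_rhs => rw [← one_mul p.1, ← cos_sq_add_sin_sq p.2]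
  simp only [neg_mul, LinearMap.det_toContinuousLinearMap, LinearMap.det_toLin,
    Matrix.det_fin_two_of, sub_neg_eq_add]
  ring

lemma ball_polar (G : ℂ → ENNReal) (hG : Measurable G) (c : ℂ) {R : ℝ} (hR : 0 < R) :
    ∫⁻ z in Metric.ball c R, G z
      = ∫⁻ r in Ioo 0 R, (ENNReal.ofReal r) * ∫⁻ θ in Ioo (-π) π, G (c + circleMap 0 r θ) := by
  -- step 1: translate to center 0
  have e1 : ∫⁻ z in Metric.ball c R, G z = ∫⁻ z in Metric.ball (0:ℂ) R, G (c + z) := by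
    have hmp : MeasurePreserving (fun z : ℂ => c + z) volume volume :=
      measurePreserving_add_left volume c
    have := hmp.setLIntegral_comp_emb (MeasurableEquiv.addLeft c).measurableEmbedding G
      (Metric.ball 0 R)
    rw [this]
    congr 1
    rw [Set.image_add_left]
    ext z
    simp [Metric.mem_ball, dist_eq_norm]
  rw [e1]
  -- step 2: move to ℝ × ℝ
  set e := Complex.measurableEquivRealProd
  have hvol : MeasurePreserving e.symm volume volume :=
    Complex.volume_preserving_equiv_real_prod.symm
  set D : Set (ℝ × ℝ) := e.symm ⁻¹' (Metric.ball (0:ℂ) R) with hD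
  have e2 : ∫⁻ z in Metric.ball (0:ℂ) R, G (c + z) = ∫⁻ p in D, G (c + e.symm p) :=
    (hvol.setLIntegral_comp_preimage_emb e.symm.measurableEmbedding
      (fun z => G (c + z)) (Metric.ball 0 R)).symm
  rw [e2]
  -- step 3: polar change of variables
  set s : Set (ℝ × ℝ) := Ioo 0 R ×ˢ Ioo (-π) π with hs
  have hsm : MeasurableSet s := measurableSet_Ioo.prod measurableSet_Ioo
  have hsub : s ⊆ polarCoord.target := by
    rintro ⟨r, θ⟩ ⟨h1, h2⟩
    exact ⟨Ioo_subset_Ioi_self h1, h2⟩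
  have habs : ∀ p : ℝ × ℝ, ‖e.symm (polarCoord.symm p)‖ = |p.1| := by
    intro p
    simp only [polarCoord_symm_apply, Complex.measurableEquivRealProd_symm_apply, e]
    rw [Complex.norm_def, Complex.normSq_mk]
    rw [show p.1 * cos p.2 * (p.1 * cos p.2) + p.1 * sin p.2 * (p.1 * sin p.2)
      = p.1^2 * ((cos p.2)^2 + (sin p.2)^2) by ring, cos_sq_add_sin_sq, mul_one, Real.sqrt_sq_eq_abs]
  -- image is almost all of D
  have him1 : polarCoord.symm '' s ⊆ D := by
    rintro q ⟨p, hp, rfl⟩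
    simp only [hD, Set.mem_preimage, Metric.mem_ball, dist_zero_right]
    rw [habs p, abs_of_pos hp.1.1]
    exact hp.1.2
  have him2 : D \ polarCoord.symm '' s ⊆ {p : ℝ × ℝ | p.2 = 0} := by
    rintro p ⟨hpD, hps⟩
    by_contra h2
    apply hps
    have hsrc : p ∈ polarCoord.source := Or.inr h2
    refine ⟨polarCoord p, ?_, polarCoord.left_inv hsrc⟩
    have htar := polarCoord.map_source hsrc
    rcases htar with ⟨h3, h4⟩
    refine ⟨⟨h3, ?_⟩, h4⟩
    · -- (polarCoord p).1 = sqrt (p.1^2+p.2^2) < R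
      have : (polarCoord p).1 = Real.sqrt (p.1^2 + p.2^2) := rfl
      rw [this]
      have hball : ‖e.symm p‖ < R := by
        simpa [hD, Metric.mem_ball, dist_zero_right] using hpD
      have : ‖e.symm p‖ = Real.sqrt (p.1^2+p.2^2) := by
        simp only [Complex.measurableEquivRealProd_symm_apply, e]
        rw [Complex.norm_def, Complex.normSq_mk]
        ring_nf
      linarith [this ▸ hball]
  have hnull : volume ({p : ℝ × ℝ | p.2 = 0}) = 0 := by
    have : {p : ℝ × ℝ | p.2 = 0} = (univ : Set ℝ) ×ˢ ({0} : Set ℝ) := by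
      ext p; simp [Prod.ext_iff, eq_comm]
    rw [this, Measure.volume_eq_prod, Measure.prod_prod]
    simp
  have hae : D =ᵐ[volume] polarCoord.symm '' s := by
    rw [Filter.eventuallyEq_set]
    have h1 : volume (D \ polarCoord.symm '' s) = 0 :=
      measure_mono_null him2 hnull
    have h2 : volume (polarCoord.symm '' s \ D) = 0 := by
      rw [Set.diff_eq_empty.mpr him1]; simp
    filter_upwards [measure_eq_zero_iff_ae_notMem.mp h1, measure_eq_zero_iff_ae_notMem.mp h2] with p hp1 hp2
    constructor
    · intro hp; by_contra hq; exact hp1 ⟨hp, hq⟩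
    · intro hp; by_contra hq; exact hp2 ⟨hp, hq⟩
  rw [setLIntegral_congr hae]
  have hderiv : ∀ p ∈ s, HasFDerivWithinAt polarCoord.symm
      (LinearMap.toContinuousLinearMap (Matrix.toLin (Module.Basis.finTwoProd ℝ) (Module.Basis.finTwoProd ℝ)
        !![cos p.2, -p.1 * sin p.2; sin p.2, p.1 * cos p.2])) s p :=
    fun p _ => (hasFDerivAt_polarCoord_symm p).hasFDerivWithinAt
  have hinj : Set.InjOn polarCoord.symm s :=
    polarCoord.symm.injOn.mono (by simpa using hsub)
  rw [lintegral_image_eq_lintegral_abs_det_fderiv_mul volume hsm hderiv hinj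
    (fun p => G (c + e.symm p))]
  -- step 4: Tonelli
  have e4 : ∀ p : ℝ × ℝ, p ∈ s → ENNReal.ofReal
      |(LinearMap.toContinuousLinearMap (Matrix.toLin (Module.Basis.finTwoProd ℝ) (Module.Basis.finTwoProd ℝ)
        !![cos p.2, -p.1 * sin p.2; sin p.2, p.1 * cos p.2])).det| * G (c + e.symm (polarCoord.symm p))
      = ENNReal.ofReal p.1 * G (c + circleMap 0 p.1 p.2) := by
    rintro ⟨r, θ⟩ hp
    rw [det_polar, abs_of_pos hp.1.1]
    have harg : e.symm (polarCoord.symm (r, θ)) = circleMap 0 r θ := by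
      simp [circleMap, Complex.ext_iff, Complex.exp_mul_I, Complex.cos_ofReal_re, Complex.sin_ofReal_re, polarCoord_symm_apply,
        Complex.measurableEquivRealProd_symm_apply, e]
    rw [harg]
  rw [setLIntegral_congr_fun hsm e4]
  have hrestr : (volume : Measure (ℝ × ℝ)).restrict s
      = (volume.restrict (Ioo 0 R)).prod (volume.restrict (Ioo (-π) π)) := by
    rw [hs, Measure.volume_eq_prod, Measure.prod_restrict]
  have hcont : Continuous fun p : ℝ × ℝ => c + circleMap 0 p.1 p.2 := by
    simp only [circleMap, zero_add]
    exact continuous_const.add ((Complex.continuous_ofReal.comp continuous_fst).mul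
      (Complex.continuous_exp.comp ((Complex.continuous_ofReal.comp continuous_snd).mul
        continuous_const)))
  have hmeas : Measurable fun p : ℝ × ℝ => ENNReal.ofReal p.1 * G (c + circleMap 0 p.1 p.2) :=
    (ENNReal.measurable_ofReal.comp measurable_fst).mul (hG.comp hcont.measurable)
  rw [hrestr, lintegral_prod _ hmeas.aemeasurable]
  refine lintegral_congr fun r => ?_
  exact lintegral_const_mul' _ _ ENNReal.ofReal_ne_top

lemma submean_s1 (u : ℂ → ℂ) (hu : Differentiable ℂ u) (c : ℂ) {R : ℝ} (hR : 0 < R) :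
    ENNReal.ofReal (π * R^2 * ‖u c‖^2) ≤ ∫⁻ z in Metric.ball c R, ENNReal.ofReal (‖u z‖^2) := by
  have hG : Measurable fun z : ℂ => ENNReal.ofReal (‖u z‖^2) :=
    ENNReal.measurable_ofReal.comp ((continuous_norm.comp hu.continuous).pow 2).measurable
  rw [ball_polar _ hG c hR]
  have key : ∀ r ∈ Ioo (0:ℝ) R, (ENNReal.ofReal r) * ENNReal.ofReal (2*π*‖u c‖^2)
      ≤ (ENNReal.ofReal r) * ∫⁻ θ in Ioo (-π) π, ENNReal.ofReal (‖u (c + circleMap 0 r θ)‖^2) := by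
    intro r hr
    refine mul_le_mul_right ?_ _
    have := circle_sq_bound u hu c hr.1
    convert this using 3 with θ
    simp [circleMap, add_assoc]
  have hIr : ∫⁻ r in Ioo 0 R, ENNReal.ofReal r = ENNReal.ofReal (R^2/2) := by
    have hint : IntegrableOn (fun r : ℝ => r) (Ioo 0 R) :=
      ((continuous_id.continuousOn (s := Icc 0 R)).integrableOn_Icc).mono_set Ioo_subset_Icc_self
    rw [← ofReal_integral_eq_lintegral_ofReal hint
      ((ae_restrict_iff' measurableSet_Ioo).mpr (Filter.Eventually.of_forall fun r hr => hr.1.le))]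
    congr 1
    rw [← integral_Ioc_eq_integral_Ioo, ← intervalIntegral.integral_of_le hR.le,
      integral_id]
    ring
  calc ENNReal.ofReal (π * R^2 * ‖u c‖^2)
      = ENNReal.ofReal (R^2/2) * ENNReal.ofReal (2*π*‖u c‖^2) := by
        rw [← ENNReal.ofReal_mul (by positivity)]
        congr 1
        ring
    _ = ∫⁻ r in Ioo 0 R, (ENNReal.ofReal r) * ENNReal.ofReal (2*π*‖u c‖^2) := by
        rw [lintegral_mul_const' _ _ ENNReal.ofReal_ne_top, hIr]
    _ ≤ _ := setLIntegral_mono' measurableSet_Ioo key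

lemma entire_zero_of_decay (u : ℂ → ℂ) (hu : Differentiable ℂ u) (C ε : ℝ) (hε : 0 < ε)
    (h1 : ∀ z : ℂ, -1 ≤ z.im → ‖u z‖ ≤ C)
    (h2 : ∀ z : ℂ, 1 ≤ z.im → ‖u z‖ ≤ C * Real.exp (-(ε * (z.im - 1)^2))) : u = 0 := by
  have hC : 0 ≤ C := le_trans (norm_nonneg (u Complex.I)) (h1 Complex.I (by norm_num [Complex.I_im]))
  -- Phragmén–Lindelöf estimate
  have hPL : ∀ c : ℂ, -1 ≤ c.im → ∀ T : ℝ, 3 ≤ T → c.im ≤ T →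
      ‖u c‖ ≤ C * Real.exp (-(ε*(T-1)^2/(T+1)) * (1 + c.im)) := by
    intro c hc T hT hcT
    set a : ℝ := ε*(T-1)^2/(T+1) with ha
    have hTpos : (0:ℝ) < T + 1 := by linarith
    have hapos : 0 ≤ a := by positivity
    set f : ℂ → ℂ := fun z => u z * Complex.exp (-(a:ℂ) * Complex.I * z) with hf
    have hfd : Differentiable ℂ f := hu.mul ((differentiable_const _ |>.mul differentiable_id).cexp)
    have hnorm : ∀ z : ℂ, ‖f z‖ = ‖u z‖ * Real.exp (a * z.im) := by
      intro z
      rw [hf]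
      simp only [norm_mul, Complex.norm_exp]
      congr 2
      simp [Complex.mul_re, Complex.mul_im]
    have key : ‖f c‖ ≤ C * Real.exp (-a) := by
      apply PhragmenLindelof.horizontal_strip (a := -1) (b := T)
        (hfd.diffContOnCl)
      · refine ⟨0, div_pos Real.pi_pos (by linarith), C * Real.exp (a*T) , ?_⟩
        rw [Asymptotics.isBigO_iff]
        refine ⟨1, ?_⟩
        rw [eventually_inf_principal]
        refine Eventually.of_forall fun z hz => ?_
        simp only [mem_preimage, mem_Ioo] at hz
        rw [hnorm]
        have b1 : ‖u z‖ ≤ C := h1 z hz.1.le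
        have b2 : Real.exp (a * z.im) ≤ Real.exp (a * T) :=
          Real.exp_le_exp.mpr (mul_le_mul_of_nonneg_left hz.2.le hapos)
        have : ‖u z‖ * Real.exp (a * z.im) ≤ C * Real.exp (a*T) :=
          mul_le_mul b1 b2 (Real.exp_pos _).le hC
        refine this.trans ?_
        have h3 : C * Real.exp (a*T) ≤ Real.exp (C * Real.exp (a*T)) := by
          nlinarith [Real.add_one_le_exp (C * Real.exp (a*T))]
        calc C * Real.exp (a*T) ≤ Real.exp (C * Real.exp (a*T)) := h3
          _ ≤ 1 * ‖Real.exp (C * Real.exp (a*T) * Real.exp (0 * |z.re|))‖ := by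
              rw [one_mul, Real.norm_eq_abs, abs_of_pos (Real.exp_pos _)]
              simp
      · intro z hz
        rw [hnorm, hz]
        have := h1 z (by rw [hz])
        calc ‖u z‖ * Real.exp (a * (-1)) ≤ C * Real.exp (a * (-1)) :=
              mul_le_mul_of_nonneg_right this (Real.exp_pos _).le
          _ = C * Real.exp (-a) := by ring_nf
      · intro z hz
        rw [hnorm, hz]
        have hb := h2 z (by rw [hz]; linarith)
        rw [hz] at hb
        calc ‖u z‖ * Real.exp (a * T)
            ≤ (C * Real.exp (-(ε * (T-1)^2))) * Real.exp (a * T) :=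
              mul_le_mul_of_nonneg_right hb (Real.exp_pos _).le
          _ = C * Real.exp (-(ε * (T-1)^2) + a * T) := by rw [mul_assoc, ← Real.exp_add]
          _ = C * Real.exp (-a) := by
              congr 1
              rw [ha]
              field_simp
              ring
      · linarith
      · exact hcT
    rw [hnorm] at key
    have hepos : (0:ℝ) < Real.exp (a * c.im) := Real.exp_pos _
    have : ‖u c‖ ≤ C * Real.exp (-a) / Real.exp (a * c.im) := by
      rw [le_div_iff₀ hepos]; exact key
    refine this.trans (le_of_eq ?_)
    rw [div_eq_mul_inv, ← Real.exp_neg, mul_assoc, ← Real.exp_add]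
    congr 2
    ring
  -- limit: u = 0 on the open half-plane
  have hzero : ∀ c : ℂ, -1 < c.im → u c = 0 := by
    intro c hc
    have h1c : 0 < 1 + c.im := by linarith
    have haT : Tendsto (fun T : ℝ => ε*(T-1)^2/(T+1)) atTop atTop := by
      have hlin : Tendsto (fun T : ℝ => ε/2 * (T-1)) atTop atTop :=
        (tendsto_atTop_add_const_right _ (-1) tendsto_id).const_mul_atTop (by positivity)
      refine tendsto_atTop_mono' atTop ?_ hlin
      filter_upwards [eventually_ge_atTop (3:ℝ)] with T hT
      rw [le_div_iff₀ (by linarith : (0:ℝ) < T + 1)]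
      nlinarith [mul_nonneg (mul_nonneg hε.le (by linarith : (0:ℝ) ≤ T-1))
        (by linarith : (0:ℝ) ≤ T-3)]
    have hb : Tendsto (fun T : ℝ => C * Real.exp (-(ε*(T-1)^2/(T+1)) * (1 + c.im))) atTop (𝓝 0) := by
      have h4 : Tendsto (fun T : ℝ => (ε*(T-1)^2/(T+1)) * (1 + c.im)) atTop atTop :=
        haT.atTop_mul_const h1c
      have h5 : Tendsto (fun T : ℝ => -((ε*(T-1)^2/(T+1)) * (1 + c.im))) atTop atBot :=
        tendsto_neg_atTop_atBot.comp h4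
      have h6 := Real.tendsto_exp_atBot.comp h5
      have := h6.const_mul C
      simpa [neg_mul] using this
    have hub : ∀ᶠ T in atTop, ‖u c‖ ≤ C * Real.exp (-(ε*(T-1)^2/(T+1)) * (1 + c.im)) := by
      filter_upwards [eventually_ge_atTop (3:ℝ), eventually_ge_atTop c.im] with T h3 h4
      exact hPL c hc.le T h3 h4
    have : ‖u c‖ ≤ 0 := ge_of_tendsto hb hub
    simpa using le_antisymm this (norm_nonneg _)
  -- identity theorem
  have hA : AnalyticOnNhd ℂ u univ := Complex.analyticOnNhd_univ_iff_differentiable.mpr hu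
  have hopen : IsOpen {z : ℂ | -1 < z.im} := isOpen_lt continuous_const Complex.continuous_im
  have hev : u =ᶠ[nhds Complex.I] 0 := by
    have hmem : {z : ℂ | -1 < z.im} ∈ nhds Complex.I :=
      hopen.mem_nhds (by simp [Complex.I_im])
    filter_upwards [hmem] with z hz
    exact hzero z hz
  have := hA.eqOn_zero_of_preconnected_of_eventuallyEq_zero isPreconnected_univ (mem_univ Complex.I) hev
  funext z
  exact this (mem_univ z)

lemma pointwise_from_weight (u : ℂ → ℂ) (hu : Differentiable ℂ u) (w : ℂ → ℝ) (c : ℂ)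
    {δ : ℝ} (hδ : 0 < δ) (hw : ∀ z ∈ Metric.ball c 1, δ ≤ w z)
    {M : ENNReal} (hfin : (∫⁻ z : ℂ, ENNReal.ofReal (‖u z‖^2 * w z)) ≤ M) (hM : M ≠ ⊤) :
    π * ‖u c‖^2 ≤ δ⁻¹ * M.toReal := by
  have h1 := submean_s1 u hu c one_pos
  have h2 : ∀ z ∈ Metric.ball c 1, ENNReal.ofReal (‖u z‖^2)
      ≤ ENNReal.ofReal δ⁻¹ * ENNReal.ofReal (‖u z‖^2 * w z) := by
    intro z hz
    rw [← ENNReal.ofReal_mul (by positivity)]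
    apply ENNReal.ofReal_le_ofReal
    have hwz := hw z hz
    have hinv : δ * δ⁻¹ = 1 := mul_inv_cancel₀ hδ.ne'
    nlinarith [sq_nonneg ‖u z‖, mul_le_mul_of_nonneg_left hwz (sq_nonneg ‖u z‖),
      inv_pos.mpr hδ]
  have h3 : (∫⁻ z in Metric.ball c 1, ENNReal.ofReal (‖u z‖^2))
      ≤ ENNReal.ofReal δ⁻¹ * ∫⁻ z : ℂ, ENNReal.ofReal (‖u z‖^2 * w z) := by
    calc (∫⁻ z in Metric.ball c 1, ENNReal.ofReal (‖u z‖^2))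
        ≤ ∫⁻ z in Metric.ball c 1, ENNReal.ofReal δ⁻¹ * ENNReal.ofReal (‖u z‖^2 * w z) :=
          setLIntegral_mono' Metric.isOpen_ball.measurableSet h2
      _ = ENNReal.ofReal δ⁻¹ * ∫⁻ z in Metric.ball c 1, ENNReal.ofReal (‖u z‖^2 * w z) :=
          lintegral_const_mul' _ _ ENNReal.ofReal_ne_top
      _ ≤ ENNReal.ofReal δ⁻¹ * ∫⁻ z : ℂ, ENNReal.ofReal (‖u z‖^2 * w z) :=
          mul_le_mul_right (setLIntegral_le_lintegral _ _) _
  have h4 : ENNReal.ofReal (π * ‖u c‖^2) ≤ ENNReal.ofReal δ⁻¹ * M := by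
    calc ENNReal.ofReal (π * ‖u c‖^2) = ENNReal.ofReal (π * 1^2 * ‖u c‖^2) := by norm_num
      _ ≤ _ := (h1.trans h3).trans (mul_le_mul_right hfin _)
  have h5 : ENNReal.ofReal δ⁻¹ * M ≠ ⊤ := ENNReal.mul_ne_top ENNReal.ofReal_ne_top hM
  have := (ENNReal.ofReal_le_iff_le_toReal h5).mp h4
  rwa [ENNReal.toReal_mul, ENNReal.toReal_ofReal (by positivity)] at this

lemma no_modes_aux (u : ℂ → ℂ) (hu : Differentiable ℂ u) (w : ℂ → ℝ)
    (hfin : (∫⁻ z : ℂ, ENNReal.ofReal (‖u z‖^2 * w z)) < ⊤)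
    (ε δ : ℝ) (hε : 0 < ε) (hδ : 0 < δ)
    (hw1 : ∀ c : ℂ, -1 ≤ c.im → ∀ z ∈ Metric.ball c 1, δ ≤ w z)
    (hw2 : ∀ c : ℂ, 1 ≤ c.im → ∀ z ∈ Metric.ball c 1,
      δ * Real.exp (2 * ε * (c.im - 1)^2) ≤ w z) : u = 0 := by
  set M : ENNReal := ∫⁻ z : ℂ, ENNReal.ofReal (‖u z‖^2 * w z) with hMdef
  have hM : M ≠ ⊤ := hfin.ne
  have hMr : 0 ≤ M.toReal := ENNReal.toReal_nonneg
  set C : ℝ := Real.sqrt (δ⁻¹ * M.toReal / π) with hC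
  have hsq : ∀ x A : ℝ, 0 ≤ x → π * x^2 ≤ A → x ≤ Real.sqrt (A / π) := by
    intro x A hx hA
    rw [show x = Real.sqrt (x^2) from (Real.sqrt_sq hx).symm]
    apply Real.sqrt_le_sqrt
    rw [le_div_iff₀ Real.pi_pos]
    linarith
  have h1 : ∀ c : ℂ, -1 ≤ c.im → ‖u c‖ ≤ C := by
    intro c hc
    exact hsq _ _ (norm_nonneg _)
      (pointwise_from_weight u hu w c hδ (hw1 c hc) le_rfl hM)
  have h2 : ∀ c : ℂ, 1 ≤ c.im → ‖u c‖ ≤ C * Real.exp (-(ε * (c.im - 1)^2)) := by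
    intro c hc
    have hδ2 : 0 < δ * Real.exp (2 * ε * (c.im - 1)^2) := by positivity
    have hb := pointwise_from_weight u hu w c hδ2 (hw2 c hc) le_rfl hM
    have := hsq _ _ (norm_nonneg _) hb
    refine this.trans (le_of_eq ?_)
    rw [mul_inv, mul_assoc, ← Real.exp_neg]
    have hexpsq : (Real.exp (-(ε * (c.im - 1)^2)))^2 = Real.exp (-(2 * ε * (c.im - 1)^2)) := by
      rw [sq, ← Real.exp_add]
      congr 1
      ring
    rw [show (δ⁻¹ * (Real.exp (-(2 * ε * (c.im - 1)^2)) * M.toReal)) / π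
      = (Real.exp (-(ε * (c.im - 1)^2)))^2 * (δ⁻¹ * M.toReal / π) by
        rw [hexpsq]; ring]
    rw [Real.sqrt_mul (sq_nonneg _), Real.sqrt_sq (Real.exp_pos _).le, hC]
    ring
  exact entire_zero_of_decay u hu C ε hε h1 h2

end Aux

open Real Set Filter Topology Function in
/-- Half-plane configuration (Section 4.1): for the potential `F` equal to `b₁ x₂²` on the
upper half-plane and `x₂²` on the lower half-plane (with `b₁ < 0`), there are no nontrivial
entire functions `u` with `u e^{F} ∈ L₂` or `u e^{-F} ∈ L₂`. -/
theorem no_zero_modes_halfplane_field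
    (b₁ : ℝ) (hb₁ : b₁ < 0) (F : ℂ → ℝ)
    (hF : ∀ z : ℂ, F z = if 0 ≤ z.im then b₁ * z.im ^ 2 else z.im ^ 2)
    (u : ℂ → ℂ) (hu : Differentiable ℂ u) :
    ((∫⁻ z : ℂ, ENNReal.ofReal (‖u z‖ ^ 2 * Real.exp (2 * F z)) < ⊤) → u = 0) ∧
    ((∫⁻ z : ℂ, ENNReal.ofReal (‖u z‖ ^ 2 * Real.exp (-2 * F z)) < ⊤) → u = 0) := by
  have him : ∀ (c z : ℂ), z ∈ Metric.ball c 1 → |z.im - c.im| < 1 := by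
    intro c z hz
    have h1 : |(z - c).im| ≤ ‖z - c‖ := Complex.abs_im_le_norm _
    have h2 : ‖z - c‖ < 1 := by
      simpa [Metric.mem_ball, Complex.dist_eq] using hz
    simpa [Complex.sub_im] using h1.trans_lt h2
  constructor
  · -- weight e^{2F}
    intro hfin
    set v : ℂ → ℂ := fun z => u (-z) with hv
    have hvd : Differentiable ℂ v := hu.comp differentiable_neg
    have hneg : MeasurePreserving (fun z : ℂ => -z) volume volume :=
      Measure.measurePreserving_neg volume
    have hfin' : (∫⁻ z : ℂ, ENNReal.ofReal (‖v z‖^2 * Real.exp (2 * F (-z)))) < ⊤ := by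
      have := hneg.lintegral_comp_emb (MeasurableEquiv.neg ℂ).measurableEmbedding
        (fun z => ENNReal.ofReal (‖u z‖^2 * Real.exp (2 * F z)))
      simp only [hv]
      rw [show (fun z : ℂ => ENNReal.ofReal (‖u (-z)‖^2 * Real.exp (2 * F (-z))))
        = fun z : ℂ => (fun y : ℂ => ENNReal.ofReal (‖u y‖^2 * Real.exp (2 * F y))) (-z) from rfl]
      rw [this]
      simpa using hfin
    have hzero : v = 0 := by
      apply no_modes_aux v hvd (fun z => Real.exp (2 * F (-z))) hfin' 1 (Real.exp (8*b₁))
        one_pos (Real.exp_pos _)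
      · intro c hc z hz
        rw [Real.exp_le_exp]
        have himz := him c z hz
        have h2 : -z.im < 2 := by
          have := abs_lt.mp himz
          linarith
        rw [hF]
        simp only [Complex.neg_im]
        by_cases hs : 0 ≤ -z.im
        · rw [if_pos hs]
          have hsq : (-z.im)^2 ≤ 4 := by nlinarith
          nlinarith
        · rw [if_neg hs]
          nlinarith [sq_nonneg (-z.im)]
      · intro c hc z hz
        rw [← Real.exp_add, Real.exp_le_exp]
        have himz := abs_lt.mp (him c z hz)
        have h2 : 0 < z.im := by linarith
        have h3 : c.im - 1 < z.im := by linarith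
        rw [hF]
        simp only [Complex.neg_im]
        rw [if_neg (by linarith : ¬ (0:ℝ) ≤ -z.im)]
        have h4 : (c.im - 1)^2 ≤ (-z.im)^2 := by
          rw [neg_sq]
          nlinarith
        nlinarith [hb₁.le]
    funext z
    have := congrFun hzero (-z)
    simpa [hv] using this
  · -- weight e^{-2F}
    intro hfin
    have hfin' : (∫⁻ z : ℂ, ENNReal.ofReal (‖u z‖^2 * Real.exp (-2 * F z))) < ⊤ := by
      simpa using hfin
    apply no_modes_aux u hu (fun z => Real.exp (-2 * F z)) hfin' (-b₁) (Real.exp (-8))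
      (by linarith) (Real.exp_pos _)
    · intro c hc z hz
      rw [Real.exp_le_exp]
      have himz := abs_lt.mp (him c z hz)
      have h2 : -2 < z.im := by linarith
      rw [hF]
      by_cases hs : 0 ≤ z.im
      · rw [if_pos hs]
        nlinarith [sq_nonneg z.im]
      · rw [if_neg hs]
        push_neg at hs
        nlinarith
    · intro c hc z hz
      rw [← Real.exp_add, Real.exp_le_exp]
      have himz := abs_lt.mp (him c z hz)
      have h2 : 0 < z.im := by linarith
      rw [hF, if_pos h2.le]
      have h4 : (c.im - 1)^2 ≤ z.im^2 := by nlinarith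
      nlinarith
end

section
/- For every real number A ≠ 0 there exists R > 1 such that the function ζ(ω) = ω · exp(A · Log(Log ω − iπ/2)) is well defined, holomorphic, and injective on the set {ω ∈ ℂ : Im ω > 0, |ω| > R}. -/
open scoped Real
open Complex

lemma abs_arg_le_div {w : ℂ} (hw : 0 < w.re) : |Complex.arg w| ≤ |w.im| / w.re := by
  have h2 : |Complex.arg w| < π / 2 := Complex.abs_arg_lt_pi_div_two_iff.2 (Or.inl hw)
  have htan : Real.tan (Complex.arg w) = w.im / w.re := Complex.tan_arg w
  rcases lt_trichotomy (Complex.arg w) 0 with h | h | h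
  · have h1 : 0 < -Complex.arg w := by linarith
    have h3 : -Complex.arg w < π / 2 := by have := abs_lt.1 h2; linarith
    have hlt := Real.lt_tan h1 h3
    rw [Real.tan_neg, htan] at hlt
    have him : w.im ≤ 0 := by
      by_contra hc
      have : 0 < w.im / w.re := div_pos (by linarith) hw
      linarith
    rw [abs_of_neg h, _root_.abs_of_nonpos him, neg_div]
    linarith
  · rw [h]; simp [div_nonneg (abs_nonneg _) hw.le]
  · have h3 : Complex.arg w < π / 2 := (abs_lt.1 h2).2
    have hlt := Real.lt_tan h h3
    rw [htan] at hlt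
    have him : 0 ≤ w.im := by
      by_contra hc
      have : w.im / w.re < 0 := div_neg_of_neg_of_pos (by linarith) hw
      linarith
    rw [abs_of_pos h, _root_.abs_of_nonneg him]
    linarith

lemma log_lipschitz {L : ℝ} (hL : 0 < L) {w₁ w₂ : ℂ} (h₁ : L ≤ w₁.re) (h₂ : L ≤ w₂.re) :
    ‖Complex.log w₂ - Complex.log w₁‖ ≤ (1 / L) * ‖w₂ - w₁‖ := by
  set s : Set ℂ := {w : ℂ | L ≤ w.re}
  have hconv : Convex ℝ s := convex_halfSpace_re_ge L
  have hd : ∀ x ∈ s, HasFDerivWithinAt Complex.log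
      ((ContinuousLinearMap.id ℂ ℂ).smulRight x⁻¹) s x := by
    intro x hx
    have hx' : x ∈ Complex.slitPlane := Or.inl (lt_of_lt_of_le hL hx)
    exact (Complex.hasDerivAt_log hx').hasFDerivAt.hasFDerivWithinAt
  have hb : ∀ x ∈ s, ‖(ContinuousLinearMap.id ℂ ℂ).smulRight x⁻¹‖ ≤ 1 / L := by
    intro x hx
    rw [ContinuousLinearMap.norm_smulRight_apply, ContinuousLinearMap.norm_id]
    have habs : L ≤ ‖x‖ := le_trans hx (Complex.re_le_norm x)
    have h3 : ‖x⁻¹‖ = ‖x‖⁻¹ := by simp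
    rw [one_mul, h3, one_div]
    exact inv_anti₀ hL habs
  exact hconv.norm_image_sub_le_of_norm_hasFDerivWithin_le hd hb h₁ h₂

lemma aux_inj {A L : ℝ} (hL : 0 < L) (hAL : 2 * |A| ≤ L) {w₁ w₂ : ℂ}
    (h₁ : L ≤ w₁.re) (h₂ : L ≤ w₂.re)
    (h : w₁ + (A : ℂ) * Complex.log w₁ = w₂ + (A : ℂ) * Complex.log w₂) : w₁ = w₂ := by
  have key : ‖w₂ - w₁‖ = ‖(A : ℂ) * (Complex.log w₂ - Complex.log w₁)‖ := by
    rw [show (A : ℂ) * (Complex.log w₂ - Complex.log w₁) = w₁ - w₂ by linear_combination -h]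
    rw [norm_sub_rev]
  have hb : ‖(A : ℂ) * (Complex.log w₂ - Complex.log w₁)‖ ≤ (|A| / L) * ‖w₂ - w₁‖ := by
    rw [norm_mul]
    have h1 : ‖(A : ℂ)‖ = |A| := by simp
    calc ‖(A:ℂ)‖ * ‖Complex.log w₂ - Complex.log w₁‖
        ≤ |A| * ((1/L) * ‖w₂ - w₁‖) := by
          rw [h1]; exact mul_le_mul_of_nonneg_left (log_lipschitz hL h₁ h₂) (abs_nonneg A)
      _ = (|A| / L) * ‖w₂ - w₁‖ := by ring
  have hhalf : |A| / L ≤ 1 / 2 := by rw [div_le_div_iff₀ hL (by norm_num)]; linarith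
  have hn : ‖w₂ - w₁‖ ≤ (1/2) * ‖w₂ - w₁‖ := by
    calc ‖w₂ - w₁‖ = ‖(A : ℂ) * (Complex.log w₂ - Complex.log w₁)‖ := key
      _ ≤ (|A| / L) * ‖w₂ - w₁‖ := hb
      _ ≤ (1/2) * ‖w₂ - w₁‖ := mul_le_mul_of_nonneg_right hhalf (norm_nonneg _)
  have hz : ‖w₂ - w₁‖ = 0 := by nlinarith [norm_nonneg (w₂ - w₁)]
  exact (sub_eq_zero.1 (norm_eq_zero.1 hz)).symm

/-- Paper's Proposition 4.2: for every real `A ≠ 0` there is `R > 1` such that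
`ζ(ω) = ω (Log ω − iπ/2)^A = ω·exp(A·Log(Log ω − iπ/2))` is holomorphic and univalent on
the upper half-plane with the disk `|ω| ≤ R` removed. -/
theorem univalence_of_log_power_map (A : ℝ) (hA : A ≠ 0) :
    ∃ R > (1 : ℝ),
      DifferentiableOn ℂ
        (fun ω : ℂ => ω * Complex.exp ((A : ℂ) *
          Complex.log (Complex.log ω - ((π : ℂ) / 2) * Complex.I)))
        {ω : ℂ | 0 < ω.im ∧ R < ‖ω‖} ∧
      Set.InjOn
        (fun ω : ℂ => ω * Complex.exp ((A : ℂ) *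
          Complex.log (Complex.log ω - ((π : ℂ) / 2) * Complex.I)))
        {ω : ℂ | 0 < ω.im ∧ R < ‖ω‖} := by
  set L : ℝ := 2 * |A| + 2 with hLdef
  have hL : 0 < L := by positivity
  have hwre : ∀ ω : ℂ, 0 < ω.im → Real.exp L < ‖ω‖ →
        L < (Complex.log ω - ((π : ℂ) / 2) * Complex.I).re := by
      intro ω h1 h2
      have hre : (Complex.log ω - ((π : ℂ) / 2) * Complex.I).re = Real.log (‖ω‖) := by
        simp [Complex.sub_re, Complex.log_re]
      rw [hre]
      calc L = Real.log (Real.exp L) := (Real.log_exp L).symm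
        _ < Real.log (‖ω‖) := Real.log_lt_log (Real.exp_pos L) h2
  refine ⟨Real.exp L, ?_, ?_, ?_⟩
  · calc (1:ℝ) = Real.exp 0 := Real.exp_zero.symm
      _ < Real.exp L := Real.exp_lt_exp.2 hL
  · -- differentiability
    intro ω hω
    obtain ⟨h1, h2⟩ := hω
    have hω0 : ω ∈ Complex.slitPlane := Or.inr h1.ne'
    have hw : (Complex.log ω - ((π : ℂ) / 2) * Complex.I) ∈ Complex.slitPlane :=
      Or.inl (lt_trans hL (hwre ω h1 h2))
    have hd1 : DifferentiableAt ℂ (fun ω : ℂ => Complex.log ω - ((π : ℂ) / 2) * Complex.I) ω :=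
      (Complex.differentiableAt_log hω0).sub_const _
    have hd2 : DifferentiableAt ℂ
        (fun ω : ℂ => Complex.log (Complex.log ω - ((π : ℂ) / 2) * Complex.I)) ω :=
      hd1.clog hw
    exact (differentiableAt_id.mul (((hd2.const_mul _)).cexp)).differentiableWithinAt
  · -- injectivity
    intro ω₁ hω₁ ω₂ hω₂ heq
    obtain ⟨h1a, h1b⟩ := hω₁
    obtain ⟨h2a, h2b⟩ := hω₂
    set w₁ : ℂ := Complex.log ω₁ - ((π : ℂ) / 2) * Complex.I with hw₁def
    set w₂ : ℂ := Complex.log ω₂ - ((π : ℂ) / 2) * Complex.I with hw₂def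
    have hr₁ : L < w₁.re := hwre ω₁ h1a h1b
    have hr₂ : L < w₂.re := hwre ω₂ h2a h2b
    have hne₁ : ω₁ ≠ 0 := by
      intro h; rw [h] at h1a; simp at h1a
    have hne₂ : ω₂ ≠ 0 := by
      intro h; rw [h] at h2a; simp at h2a
    -- rewrite as exponentials
    have hexp : Complex.exp (Complex.log ω₁ + (A:ℂ) * Complex.log w₁)
        = Complex.exp (Complex.log ω₂ + (A:ℂ) * Complex.log w₂) := by
      rw [Complex.exp_add, Complex.exp_add, Complex.exp_log hne₁, Complex.exp_log hne₂]
      exact heq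
    obtain ⟨n, hn⟩ := Complex.exp_eq_exp_iff_exists_int.1 hexp
    -- bound imaginary parts
    have him : ∀ ω : ℂ, 0 < ω.im → Real.exp L < ‖ω‖ →
        |((A:ℂ) * Complex.log (Complex.log ω - ((π : ℂ) / 2) * Complex.I)).im| ≤ π / 4 := by
      intro ω ha hb
      set w : ℂ := Complex.log ω - ((π : ℂ) / 2) * Complex.I
      have hwr : L < w.re := hwre ω ha hb
      have hwi : |w.im| ≤ π / 2 := by
        have : w.im = Complex.arg ω - π / 2 := by
          simp [w, Complex.sub_im, Complex.log_im]
        rw [this, abs_le]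
        constructor
        · have := Complex.arg_nonneg_iff.2 ha.le; linarith
        · have := Complex.arg_le_pi ω; linarith
      have harg : |Complex.arg w| ≤ (π/2) / L := by
        calc |Complex.arg w| ≤ |w.im| / w.re := abs_arg_le_div (lt_trans hL hwr)
          _ ≤ (π/2) / L := by
            apply div_le_div₀ (by positivity) hwi hL hwr.le
      have hmul : ((A:ℂ) * Complex.log w).im = A * Complex.arg w := by
        simp [Complex.mul_im, Complex.log_im]
      rw [hmul, abs_mul]
      have hAL2 : |A| / L ≤ 1 / 2 := by
        rw [div_le_div_iff₀ hL (by norm_num)]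
        rw [hLdef]; linarith [abs_nonneg A]
      calc |A| * |Complex.arg w| ≤ |A| * ((π/2)/L) :=
            mul_le_mul_of_nonneg_left harg (abs_nonneg A)
        _ = (|A| / L) * (π/2) := by ring
        _ ≤ (1/2) * (π/2) := mul_le_mul_of_nonneg_right hAL2 (by positivity)
        _ = π / 4 := by ring
    -- n = 0
    have hnim : Complex.arg ω₁ + ((A:ℂ) * Complex.log w₁).im
        = Complex.arg ω₂ + ((A:ℂ) * Complex.log w₂).im + (n:ℝ) * (2 * π) := by
      have := congrArg Complex.im hn
      simpa [Complex.add_im, Complex.log_im, Complex.mul_im, Complex.mul_re] using this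
    have harg₁ := Complex.arg_nonneg_iff.2 h1a.le
    have harg₂ := Complex.arg_nonneg_iff.2 h2a.le
    have hple₁ := Complex.arg_le_pi ω₁
    have hple₂ := Complex.arg_le_pi ω₂
    have hb₁ := him ω₁ h1a h1b
    have hb₂ := him ω₂ h2a h2b
    rw [← hw₁def] at hb₁
    rw [← hw₂def] at hb₂
    have hπ : 0 < π := Real.pi_pos
    have hn0 : n = 0 := by
      by_contra hne
      have h1 : (1:ℝ) ≤ |(n:ℝ)| := by
        have h0 : (1:ℤ) ≤ |n| := Int.one_le_abs (by exact_mod_cast hne)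
        calc (1:ℝ) = ((1:ℤ):ℝ) := by norm_num
          _ ≤ ((|n|:ℤ):ℝ) := by exact_mod_cast h0
          _ = |(n:ℝ)| := by push_cast; ring
      obtain ⟨e1a, e1b⟩ := abs_le.1 hb₁
      obtain ⟨e2a, e2b⟩ := abs_le.1 hb₂
      have h2 : |(n:ℝ) * (2 * π)| ≤ 3 * π / 2 :=
        abs_le.2 ⟨by linarith, by linarith⟩
      rw [abs_mul, abs_of_pos (by positivity : (0:ℝ) < 2 * π)] at h2
      have h3 : 1 * (2 * π) ≤ |(n:ℝ)| * (2 * π) :=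
        mul_le_mul_of_nonneg_right h1 (by positivity)
      linarith
    rw [hn0] at hn
    simp only [Int.cast_zero, zero_mul, add_zero] at hn
    -- reduce to aux_inj
    have hlog₁ : Complex.log ω₁ = w₁ + ((π : ℂ) / 2) * Complex.I := by
      rw [hw₁def]; ring
    have hlog₂ : Complex.log ω₂ = w₂ + ((π : ℂ) / 2) * Complex.I := by
      rw [hw₂def]; ring
    have hfin : w₁ + (A:ℂ) * Complex.log w₁ = w₂ + (A:ℂ) * Complex.log w₂ := by
      rw [hlog₁, hlog₂] at hn
      linear_combination hn
    have hw : w₁ = w₂ := aux_inj hL (by rw [hLdef]; linarith) hr₁.le hr₂.le hfin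
    have : Complex.log ω₁ = Complex.log ω₂ := by rw [hlog₁, hlog₂, hw]
    calc ω₁ = Complex.exp (Complex.log ω₁) := (Complex.exp_log hne₁).symm
      _ = Complex.exp (Complex.log ω₂) := by rw [this]
      _ = ω₂ := Complex.exp_log hne₂
end

section
/- For every real number A ≠ 0 there exists ς₀ > 2π such that for every ς ≥ ς₀ the function ζ(z) = e^z · exp(A · Log z) is injective on the half-strip Π_ς = {z = x + iy ∈ ℂ : x > ς, |y| < π/2}. -/
open scoped Real

private lemma log_lip {ς : ℝ} (hς : 0 < ς) {z w : ℂ}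
    (hz : ς < z.re) (hw : ς < w.re) :
    ‖Complex.log z - Complex.log w‖ ≤ ς⁻¹ * ‖z - w‖ := by
  have hconv : Convex ℝ {c : ℂ | ς < c.re} := convex_halfSpace_re_gt ς
  have key : ∀ x ∈ {c : ℂ | ς < c.re}, HasFDerivWithinAt Complex.log
      (ContinuousLinearMap.restrictScalars ℝ
        ((1 : ℂ →L[ℂ] ℂ).smulRight x⁻¹)) {c : ℂ | ς < c.re} x := by
    intro x hx
    have hxs : x ∈ Complex.slitPlane := Complex.mem_slitPlane_iff.2 (Or.inl (hς.trans hx))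
    exact ((Complex.hasDerivAt_log hxs).hasFDerivAt.restrictScalars ℝ).hasFDerivWithinAt
  have bound : ∀ x ∈ {c : ℂ | ς < c.re},
      ‖ContinuousLinearMap.restrictScalars ℝ ((1 : ℂ →L[ℂ] ℂ).smulRight x⁻¹)‖ ≤ ς⁻¹ := by
    intro x hx
    rw [ContinuousLinearMap.norm_restrictScalars, ContinuousLinearMap.norm_smulRight_apply,
      norm_one, one_mul, norm_inv]
    have hxnorm : ς ≤ ‖x‖ := le_trans (le_of_lt hx) (Complex.re_le_norm x)
    exact inv_anti₀ hς hxnorm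
  exact hconv.norm_image_sub_le_of_norm_hasFDerivWithin_le key bound hw hz

private lemma arg_bound {ς : ℝ} (hς : 0 < ς) {z : ℂ}
    (hz : ς < z.re) (him : |z.im| < π / 2) :
    |Complex.arg z| ≤ π ^ 2 / (4 * ς) := by
  have hre : (0 : ℝ) ≤ z.re := le_of_lt (hς.trans hz)
  have harg : |Complex.arg z| ≤ π / 2 := Complex.abs_arg_le_pi_div_two_iff.2 hre
  have hjordan : 2 / π * |Complex.arg z| ≤ |Real.sin (Complex.arg z)| :=
    Real.mul_abs_le_abs_sin harg
  have hsin : Real.sin (Complex.arg z) = z.im / ‖z‖ := Complex.sin_arg z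
  have habs : ς ≤ ‖z‖ := le_trans (le_of_lt hz) (Complex.re_le_norm z)
  have habs' : (0:ℝ) < ‖z‖ := lt_of_lt_of_le hς habs
  have hsinle : |Real.sin (Complex.arg z)| ≤ (π / 2) / ς := by
    rw [hsin, abs_div, abs_of_pos habs']
    apply div_le_div₀ (by positivity) (le_of_lt him) hς habs
  have hpi : (0:ℝ) < π := Real.pi_pos
  have h1 : 2 / π * |Complex.arg z| ≤ (π / 2) / ς := le_trans hjordan hsinle
  rw [div_mul_eq_mul_div, div_le_div_iff₀ hpi hς] at h1
  rw [le_div_iff₀ (by positivity)]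
  nlinarith [abs_nonneg (Complex.arg z)]

/-- Key step in the paper's Proposition 4.2: for every real `A ≠ 0` there is `ς₀ > 2π`
such that for all `ς ≥ ς₀` the function `ζ(z) = e^z z^A = e^z·exp(A·Log z)` is injective
on the half-strip `Π_ς = {x + iy : x > ς, |y| < π/2}`. -/
theorem injective_on_halfstrip (A : ℝ) (hA : A ≠ 0) :
    ∃ ς₀ > 2 * π, ∀ ς : ℝ, ς₀ ≤ ς →
      Set.InjOn (fun z : ℂ => Complex.exp z * Complex.exp ((A : ℂ) * Complex.log z))
        {z : ℂ | ς < z.re ∧ |z.im| < π / 2} := by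
  have hpi : (0:ℝ) < π := Real.pi_pos
  have hAn : (0:ℝ) ≤ |A| := abs_nonneg A
  refine ⟨(2 * π + 1) * (|A| + 1), by nlinarith, fun ς hς z₁ hz₁ z₂ hz₂ heq ↦ ?_⟩
  obtain ⟨hz₁re, hz₁im⟩ := hz₁
  obtain ⟨hz₂re, hz₂im⟩ := hz₂
  have hςpos : (0:ℝ) < ς := by nlinarith
  have hςA : |A| < ς := by nlinarith
  -- combine the exponentials
  replace heq : Complex.exp (z₁ + (A : ℂ) * Complex.log z₁)
      = Complex.exp (z₂ + (A : ℂ) * Complex.log z₂) := by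
    simpa [Complex.exp_add] using heq
  obtain ⟨n, hn⟩ := Complex.exp_eq_exp_iff_exists_int.mp heq
  -- the imaginary part of A * log z is A * arg z, bounded by π/2 in abs; conclude n = 0
  have hbd : ∀ z : ℂ, ς < z.re → |z.im| < π / 2 → |A * Complex.arg z| < π / 2 := by
    intro z hzre hzim
    have h1 : |Complex.arg z| ≤ π ^ 2 / (4 * ς) := arg_bound hςpos hzre hzim
    have h2 : |A * Complex.arg z| = |A| * |Complex.arg z| := abs_mul _ _
    rw [h2]
    have h3 : |A| * |Complex.arg z| ≤ |A| * (π ^ 2 / (4 * ς)) :=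
      mul_le_mul_of_nonneg_left h1 hAn
    have h4 : |A| * (π ^ 2 / (4 * ς)) < π / 2 := by
      rw [← mul_div_assoc, div_lt_iff₀ (by positivity)]
      nlinarith [mul_pos hpi (show (0:ℝ) < 2 * ς - π * |A| by nlinarith)]
    linarith
  have him := congrArg Complex.im hn
  simp only [Complex.add_im, Complex.mul_im, Complex.ofReal_re, Complex.ofReal_im,
    Complex.log_im, Complex.log_re, Complex.intCast_re, Complex.intCast_im,
    Complex.I_re, Complex.I_im, Complex.mul_re, Complex.re_ofNat, Complex.im_ofNat,
    mul_zero, zero_mul, mul_one, add_zero, zero_add, sub_zero, zero_sub] at him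
  have hb1 := hbd z₁ hz₁re hz₁im
  have hb2 := hbd z₂ hz₂re hz₂im
  have habs1 := abs_lt.mp hb1
  have habs2 := abs_lt.mp hb2
  have habsz1 := abs_lt.mp hz₁im
  have habsz2 := abs_lt.mp hz₂im
  have hn0 : n = 0 := by
    by_contra h
    have h1 : (1:ℝ) ≤ |(n:ℝ)| := by
      exact_mod_cast Int.one_le_abs h
    rcases abs_cases (n:ℝ) with ⟨he, _⟩ | ⟨he, _⟩ <;> nlinarith
  rw [hn0] at hn
  simp only [Int.cast_zero, zero_mul, add_zero] at hn
  -- now z₁ + A log z₁ = z₂ + A log z₂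
  have hdiff : z₁ - z₂ = (A : ℂ) * (Complex.log z₂ - Complex.log z₁) := by
    linear_combination hn
  by_contra hne
  have hz12 : z₁ - z₂ ≠ 0 := sub_ne_zero.mpr hne
  have hnorm : ‖z₁ - z₂‖ = |A| * ‖Complex.log z₂ - Complex.log z₁‖ := by
    rw [hdiff, norm_mul, Complex.norm_real, Real.norm_eq_abs]
  have hlip : ‖Complex.log z₂ - Complex.log z₁‖ ≤ ς⁻¹ * ‖z₂ - z₁‖ :=
    log_lip hςpos hz₂re hz₁re
  rw [norm_sub_rev z₂ z₁] at hlip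
  have hpos : (0:ℝ) < ‖z₁ - z₂‖ := norm_pos_iff.mpr hz12
  have : ‖z₁ - z₂‖ ≤ |A| * (ς⁻¹ * ‖z₁ - z₂‖) := by
    calc ‖z₁ - z₂‖ = |A| * ‖Complex.log z₂ - Complex.log z₁‖ := hnorm
      _ ≤ |A| * (ς⁻¹ * ‖z₁ - z₂‖) := mul_le_mul_of_nonneg_left hlip hAn
  have hinv : |A| * ς⁻¹ < 1 := by
    rw [← div_eq_mul_inv, div_lt_one hςpos]; exact hςA
  nlinarith
end

section
/- For each b₁ ∈ (−1/2, 0) there exists θ₀ ∈ (0, π/2) such that for every α ∈ (π − θ₀, π) there exist constants A > 0, C > 0 and r₀ > e with the following property: for every r > r₀ and every ψ ∈ [7π/4 + α/2 − A/log r, 9π/4 + α/2 + A/log r] one has −F(r e^{iψ}) ≥ C r². -/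
open MeasureTheory
open scoped Real

/-- The argument of a nonzero complex number, taken in `[0, 2π)`. -/
noncomputable def argTwoPi (z : ℂ) : ℝ :=
  if 0 ≤ Complex.arg z then Complex.arg z else Complex.arg z + 2 * π

/-- The open sector `Ω₁ = {z ≠ 0 : 0 < arg z < α}`. -/
def sectorOne (α : ℝ) : Set ℂ := {z : ℂ | z ≠ 0 ∧ 0 < argTwoPi z ∧ argTwoPi z < α}

/-- The open sector `Ω₂ = {z ≠ 0 : α < arg z < 2π}`. -/
def sectorTwo (α : ℝ) : Set ℂ := {z : ℂ | z ≠ 0 ∧ α < argTwoPi z ∧ argTwoPi z < 2 * π}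

/-- The branch `log_α` of the logarithm on `ℂ ∖ L_α` whose imaginary part lies in
`(α, α + 2π)`, where `L_α = {r e^{iα} : r ≥ 0}`. -/
noncomputable def logBranch (α : ℝ) (z : ℂ) : ℂ :=
  Complex.log (z * Complex.exp (-((α + π : ℝ) : ℂ) * Complex.I)) + ((α + π : ℝ) : ℂ) * Complex.I

/-- The power-logarithmic term `(c₀ sin α / (2π)) · Re((z e^{−iα/2})² · log_α z)`,
with `c₀ = 1 - b₁`. -/
noncomputable def logTerm (α b₁ : ℝ) (z : ℂ) : ℝ :=
  (1 - b₁) * Real.sin α / (2 * π) *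
    ((z * Complex.exp (-((α / 2 : ℝ) : ℂ) * Complex.I)) ^ 2 * logBranch α z).re

/-- `F` is the solution of the Poisson equation for the sector configuration: it is
continuous away from the origin, vanishes at the origin, and equals
`φ(z) − (c₀ sin α/(2π)) Re((z e^{−iα/2})² log_α z)` on the two open sectors, where
`φ = b₁ (Im z)²` on `Ω₁` and `φ = (Im z)²` on `Ω₂`. -/
def IsSectorPotential (α b₁ : ℝ) (F : ℂ → ℝ) : Prop :=
  ContinuousOn F {z : ℂ | z ≠ 0} ∧ F 0 = 0 ∧
  (∀ z ∈ sectorOne α, F z = b₁ * z.im ^ 2 - logTerm α b₁ z) ∧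
  (∀ z ∈ sectorTwo α, F z = z.im ^ 2 - logTerm α b₁ z)



lemma aux_sin_eighth : (1:ℝ)/3 ≤ Real.sin (π/8) := by
  have h1 : (0:ℝ) < π/8 := by positivity
  have h2 : π/8 ≤ 1 := by nlinarith [Real.pi_lt_d6]
  have h3 := Real.sin_gt_sub_cube h1
  have h4 : (π/8)^3 ≤ (3.141593/8)^3 := by
    have := Real.pi_lt_d6
    have h0 : (0:ℝ) ≤ π/8 := by positivity
    have h5 : π/8 ≤ 3.141593/8 := by linarith
    exact pow_le_pow_left₀ h0 h5 3
  nlinarith [Real.pi_gt_d6]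

lemma aux_sin_lb {x : ℝ} (h1 : π/8 ≤ x) (h2 : x ≤ π - π/8) : (1:ℝ)/3 ≤ Real.sin x := by
  have hπ := Real.pi_gt_d6
  rcases le_total x (π/2) with h | h
  · refine le_trans aux_sin_eighth ?_
    exact (Real.strictMonoOn_sin.monotoneOn ⟨by linarith, by linarith⟩ ⟨by linarith, h⟩ h1)
  · rw [← Real.sin_pi_sub]
    refine le_trans aux_sin_eighth ?_
    exact (Real.strictMonoOn_sin.monotoneOn ⟨by linarith, by linarith⟩
      ⟨by linarith, by linarith⟩ (by linarith))

lemma aux_rexp_form {r : ℝ} (t : ℝ) (hr : 0 < r) :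
    (r:ℂ) * Complex.exp ((t:ℂ) * Complex.I)
      = Complex.exp ((Real.log r : ℂ) + (t:ℂ) * Complex.I) := by
  rw [Complex.exp_add, ← Complex.ofReal_exp, Real.exp_log hr]

lemma aux_re (x y u v : ℝ) :
    (Complex.exp ((x:ℂ) + (y:ℂ) * Complex.I) * ((u:ℂ) + (v:ℂ) * Complex.I)).re
      = Real.exp x * (Real.cos y * u - Real.sin y * v) := by
  have hx : (Complex.exp (x:ℂ)).re = Real.exp x := by
    rw [← Complex.ofReal_exp, Complex.ofReal_re]
  have hx' : (Complex.exp (x:ℂ)).im = 0 := by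
    rw [← Complex.ofReal_exp, Complex.ofReal_im]
  rw [Complex.exp_add]
  simp [Complex.mul_re, Complex.mul_im, Complex.exp_ofReal_mul_I_re,
    Complex.exp_ofReal_mul_I_im, hx, hx']
  ring


lemma aux_K (b sα p : ℝ) (hb' : b < 0) (hs0 : 0 ≤ sα)
    (hs : sα ≤ -b/100) (hp : 3 < p) (hb2 : 1 - b ≤ 3/2) :
    (1 - b) * sα / (2 * p) ≤ -b/400 := by
  rw [div_le_iff₀ (by linarith)]
  nlinarith [mul_le_mul hb2 hs hs0 (by norm_num : (0:ℝ) ≤ (3/2:ℝ)),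
    mul_le_mul_of_nonneg_left (show (6:ℝ) ≤ 2*p by linarith)
      (show (0:ℝ) ≤ -b/400 by linarith)]

lemma aux_final (b r2 s K X : ℝ) (hb' : b < 0) (hr2 : 0 < r2) (hs : 1/9 ≤ s)
    (hK : 0 ≤ K) (hKu : K ≤ -b/400) (hX : -(2+3*π) ≤ X) :
    -b/16 * r2 ≤ (-b) * s * r2 + K * (r2 * X) := by
  have hπ1 := Real.pi_gt_d6
  have hπ2 := Real.pi_lt_d6
  have h1 : K * (r2 * (-(2+3*π))) ≤ K * (r2 * X) :=
    mul_le_mul_of_nonneg_left (mul_le_mul_of_nonneg_left hX hr2.le) hK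
  have h2 : K * (r2 * (2+3*π)) ≤ (-b/400) * (r2 * (2+3*π)) :=
    mul_le_mul_of_nonneg_right hKu (by positivity)
  have h3 : (-b) * (1/9) * r2 ≤ (-b) * s * r2 := by
    have := mul_le_mul_of_nonneg_right (mul_le_mul_of_nonneg_left hs
      (show (0:ℝ) ≤ -b by linarith)) hr2.le
    linarith
  have h4 : 0 ≤ (-b) * r2 * (3.141593 - π) := by
    apply mul_nonneg (mul_nonneg (by linarith) hr2.le) (by linarith)
  have h5 : b * r2 ≤ 0 := mul_nonpos_of_nonpos_of_nonneg hb'.le hr2.le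
  nlinarith [h1, h2, h3, h4, h5]

set_option maxHeartbeats 1000000 in
/-- Section 4.3: lower bound `−F ≥ C r²` on the slightly enlarged quarter-plane `S′`:
for `b₁ ∈ (−1/2, 0)` and `α` close enough to `π`, there are `A, C > 0` and `r₀ > e` such
that `−F(r e^{iψ}) ≥ C r²` whenever `r > r₀` and
`ψ ∈ [7π/4 + α/2 − A/log r, 9π/4 + α/2 + A/log r]`. -/
theorem neg_F_quadratic_lower_bound_on_enlarged_quarterplane
    (b₁ : ℝ) (hb₁ : -(1/2 : ℝ) < b₁) (hb₁' : b₁ < 0) :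
    ∃ θ₀ : ℝ, 0 < θ₀ ∧ θ₀ < π / 2 ∧
      ∀ α : ℝ, π - θ₀ < α → α < π →
        ∀ F : ℂ → ℝ, IsSectorPotential α b₁ F →
          ∃ A > (0 : ℝ), ∃ C > (0 : ℝ), ∃ r₀ > Real.exp 1,
            ∀ r : ℝ, r₀ < r → ∀ ψ : ℝ,
              7 * π / 4 + α / 2 - A / Real.log r ≤ ψ →
              ψ ≤ 9 * π / 4 + α / 2 + A / Real.log r →
                C * r ^ 2 ≤ -F ((r : ℂ) * Complex.exp ((ψ : ℂ) * Complex.I)) := by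
  have hπ1 := Real.pi_gt_d6
  have hπ2 := Real.pi_lt_d6
  have hb : -b₁ < 1/2 := by linarith
  refine ⟨-b₁/100, by linarith, by nlinarith, ?_⟩
  intro α hα1 hα2 F hF
  obtain ⟨-, -, hF1, -⟩ := hF
  refine ⟨1, one_pos, -b₁/16, by linarith, Real.exp 6, Real.exp_lt_exp.mpr (by norm_num), ?_⟩
  intro r hr ψ hψ1 hψ2
  have hr0 : (0:ℝ) < r := lt_trans (Real.exp_pos 6) hr
  have hL : 6 < Real.log r := (Real.lt_log_iff_exp_lt hr0).mpr hr
  set L := Real.log r with hLdef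
  have hL0 : (0:ℝ) < L := by linarith
  have hδ : 1/L < 1/6 := by rw [div_lt_div_iff₀ hL0 (by norm_num)]; linarith
  have hδ0 : (0:ℝ) < 1/L := by positivity
  have hα1' : π - 1/200 < α := by linarith
  -- the polar angle within [0, 2π)
  set a := ψ - 2*π with hadef
  have hψ1' : 7 * π / 4 + α / 2 - 1/L ≤ ψ := by simpa using hψ1
  have hψ2' : ψ ≤ 9 * π / 4 + α / 2 + 1/L := by simpa using hψ2
  have ha_lb : π/8 ≤ a := by simp only [hadef]; nlinarith
  have ha_ub : a ≤ π - π/8 := by simp only [hadef]; nlinarith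
  have ha_pos : 0 < a := by nlinarith
  have ha_lt_α : a < α := by nlinarith
  set z := (r : ℂ) * Complex.exp ((ψ : ℂ) * Complex.I) with hzdef
  have hz_ne : z ≠ 0 := mul_ne_zero (by exact_mod_cast hr0.ne') (Complex.exp_ne_zero _)
  -- the argument of z
  have hexpa : Complex.exp ((ψ:ℂ) * Complex.I)
      = Complex.cos (a:ℂ) + Complex.sin (a:ℂ) * Complex.I := by
    rw [Complex.exp_mul_I]
    have h : (a:ℂ) = (ψ:ℂ) - 2*(π:ℂ) := by push_cast [hadef]; ring
    rw [h, Complex.cos_sub_two_pi, Complex.sin_sub_two_pi]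
  have harg : Complex.arg z = a := by
    rw [hzdef, hexpa, Complex.arg_real_mul _ hr0,
      Complex.arg_cos_add_sin_mul_I ⟨by nlinarith, by nlinarith⟩]
  have hargTwoPi : argTwoPi z = a := by
    unfold argTwoPi
    rw [harg, if_pos ha_pos.le]
  have hsector : z ∈ sectorOne α := by
    exact ⟨hz_ne, by rw [hargTwoPi]; exact ha_pos, by rw [hargTwoPi]; exact ha_lt_α⟩
  have hFz := hF1 z hsector
  -- imaginary part of z
  have him : z.im = r * Real.sin a := by
    rw [hzdef, hexpa]
    simp [Complex.mul_im, Complex.add_im, ← Complex.ofReal_cos, ← Complex.ofReal_sin]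
  -- z as a single exponential
  have hzexp : z = Complex.exp ((L:ℂ) + (ψ:ℂ) * Complex.I) := aux_rexp_form ψ hr0
  have him_b1 : -π < ψ - (α + π) := by nlinarith
  have him_b2 : ψ - (α + π) ≤ π := by nlinarith
  -- the branch of log
  have hlogB : logBranch α z = (L:ℂ) + (ψ:ℂ) * Complex.I := by
    unfold logBranch
    rw [hzexp, ← Complex.exp_add]
    have h1 : ((L:ℂ) + (ψ:ℂ) * Complex.I + -(((α + π : ℝ)):ℂ) * Complex.I)
        = ((L:ℂ) + ((ψ - (α + π) : ℝ):ℂ) * Complex.I) := by push_cast; ring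
    have h2 : ((L:ℂ) + ((ψ - (α + π) : ℝ):ℂ) * Complex.I).im = ψ - (α + π) := by simp
    rw [h1, Complex.log_exp (by rw [h2]; exact him_b1) (by rw [h2]; exact him_b2)]
    push_cast; ring
  -- the squared factor
  have hsq : (z * Complex.exp (-((α / 2 : ℝ) : ℂ) * Complex.I)) ^ 2
      = Complex.exp (((2*L : ℝ):ℂ) + ((2*ψ - α : ℝ):ℂ) * Complex.I) := by
    rw [hzexp, ← Complex.exp_add, sq, ← Complex.exp_add]
    congr 1
    push_cast; ring
  have hre : ((z * Complex.exp (-((α / 2 : ℝ) : ℂ) * Complex.I)) ^ 2 * logBranch α z).re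
      = Real.exp (2*L) * (Real.cos (2*ψ - α) * L - Real.sin (2*ψ - α) * ψ) := by
    rw [hsq, hlogB]
    have : ((L:ℝ):ℂ) + (ψ:ℂ) * Complex.I = ((L:ℝ):ℂ) + ((ψ:ℝ):ℂ) * Complex.I := rfl
    exact aux_re (2*L) (2*ψ - α) L ψ
  have hexp2L : Real.exp (2*L) = r^2 := by
    rw [two_mul, Real.exp_add, hLdef, Real.exp_log hr0]; ring
  -- bound on sin α
  have hsinα0 : 0 ≤ Real.sin α := Real.sin_nonneg_of_nonneg_of_le_pi (by nlinarith) (by linarith)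
  have hsinα : Real.sin α ≤ -b₁/100 := by
    rw [← Real.sin_pi_sub]
    have h1 : Real.sin (π - α) < π - α := Real.sin_lt (by linarith)
    linarith
  -- bound on cos (2*ψ - α)
  have hcos : -(2/L) ≤ Real.cos (2*ψ - α) := by
    set u := 2*ψ - α - 4*π with hudef
    have hc : Real.cos (2*ψ - α) = Real.cos u := by
      rw [hudef, show 2*ψ - α - 4*π = 2*ψ - α - 2*π - 2*π by ring,
        Real.cos_sub_two_pi, Real.cos_sub_two_pi]
    have h2L' : 2/L = 2*(1/L) := by ring
    have hu_abs : |u| ≤ π/2 + 2/L := by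
      rw [abs_le]
      constructor <;> · simp only [hudef]; rw [h2L']; linarith
    have h2L : 2/L < 1/3 := by rw [div_lt_div_iff₀ hL0 (by norm_num)]; linarith
    have hcc : Real.cos (π/2 + 2/L) ≤ Real.cos |u| :=
      Real.cos_le_cos_of_nonneg_of_le_pi (abs_nonneg u) (by nlinarith) hu_abs
    have hval : Real.cos (π/2 + 2/L) = -Real.sin (2/L) := by
      rw [add_comm]; exact Real.cos_add_pi_div_two _
    have hs : Real.sin (2/L) < 2/L := Real.sin_lt (by positivity)
    rw [hc, ← Real.cos_abs u]
    linarith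
  have hψ_pos : 0 < ψ := by nlinarith
  have hψ_ub : ψ ≤ 3*π := by nlinarith
  -- assemble
  have hsin_lb : (1:ℝ)/3 ≤ Real.sin a := aux_sin_lb ha_lb ha_ub
  have hsin_sq : (1:ℝ)/9 ≤ (Real.sin a)^2 := by nlinarith
  have hlogTerm : logTerm α b₁ z
      = (1 - b₁) * Real.sin α / (2 * π) *
          (r^2 * (Real.cos (2*ψ - α) * L - Real.sin (2*ψ - α) * ψ)) := by
    unfold logTerm
    rw [hre, hexp2L]
    try ring
  set K := (1 - b₁) * Real.sin α / (2 * π) with hKdef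
  have hK0 : 0 ≤ K := by
    apply div_nonneg (mul_nonneg (by linarith) hsinα0) (by positivity)
  have hK_ub : K ≤ -b₁/400 :=
    aux_K b₁ (Real.sin α) π hb₁' hsinα0 hsinα (by linarith) (by linarith)
  -- bound the bracket
  have hcL : -2 ≤ Real.cos (2*ψ - α) * L := by
    have := mul_le_mul_of_nonneg_right hcos hL0.le
    rw [neg_mul, div_mul_cancel₀] at this
    · linarith
    · exact hL0.ne'
  have hsθψ : Real.sin (2*ψ - α) * ψ ≤ 3*π :=
    calc Real.sin (2*ψ - α) * ψ ≤ 1 * ψ :=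
          mul_le_mul_of_nonneg_right (Real.sin_le_one _) hψ_pos.le
      _ = ψ := one_mul _
      _ ≤ 3*π := hψ_ub
  have hbracket : -(2 + 3*π) ≤ Real.cos (2*ψ - α) * L - Real.sin (2*ψ - α) * ψ := by
    linarith
  have hr2 : (0:ℝ) < r^2 := by positivity
  rw [hFz, hlogTerm, him]
  have heq : -(b₁ * (r * Real.sin a) ^ 2
        - K * (r^2 * (Real.cos (2*ψ - α) * L - Real.sin (2*ψ - α) * ψ)))
      = (-b₁) * ((Real.sin a)^2) * r^2
        + K * (r^2 * (Real.cos (2*ψ - α) * L - Real.sin (2*ψ - α) * ψ)) := by ring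
  rw [heq]
  exact aux_final b₁ (r^2) ((Real.sin a)^2) K _ hb₁' hr2 hsin_sq hK0 hK_ub hbracket
end

section
/- The function F extends to a continuously differentiable function on ℂ ∖ {0}; moreover ΔF(z) = 2b₁ for every z in the open sector Ω₁, and ΔF(z) = 2 for every z in the open sector Ω₂, where Δ = ∂²/∂x₁² + ∂²/∂x₂². -/
open MeasureTheory
open scoped Real

/-- The Laplacian `Δ = ∂²/∂x₁² + ∂²/∂x₂²` of a function on `ℂ ≅ ℝ²`. -/
noncomputable def planeLaplacian (G : ℂ → ℝ) (z : ℂ) : ℝ :=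
  iteratedDeriv 2 (fun t : ℝ => G (z + (t : ℂ))) 0 +
  iteratedDeriv 2 (fun t : ℝ => G (z + (t : ℂ) * Complex.I)) 0


open Complex
open scoped Topology

noncomputable section SectorAux

/-- `t * |t|`, a `C¹` function. -/
def tAbs (t : ℝ) : ℝ := t * |t|

lemma hasDerivAt_tAbs (t : ℝ) : HasDerivAt tAbs (2 * |t|) t := by
  rcases lt_trichotomy t 0 with ht | rfl | ht
  · have h : HasDerivAt (fun s : ℝ => -(s * s)) (2 * |t|) t := by
      have h0 := ((hasDerivAt_id t).mul (hasDerivAt_id t)).neg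
      exact h0.congr_deriv (by simp [abs_of_neg ht]; ring)
    refine h.congr_of_eventuallyEq ?_
    filter_upwards [eventually_lt_nhds ht] with s hs
    simp [tAbs, abs_of_neg hs]
  · have h : HasDerivAt tAbs 0 0 := by
      rw [hasDerivAt_iff_isLittleO, Asymptotics.isLittleO_iff]
      intro c hc
      filter_upwards [Metric.ball_mem_nhds (0:ℝ) hc] with s hs
      simp only [Real.dist_eq, Metric.mem_ball, sub_zero] at hs
      have h1 : ‖tAbs s - tAbs 0 - (s - 0) • (0:ℝ)‖ = |s| * |s| := by
        simp [tAbs, abs_mul, abs_abs]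
      rw [h1, Real.norm_eq_abs, sub_zero]
      nlinarith [abs_nonneg s]
    simpa using h
  · have h : HasDerivAt (fun s : ℝ => s * s) (2 * |t|) t := by
      have h0 := (hasDerivAt_id t).mul (hasDerivAt_id t)
      exact h0.congr_deriv (by simp [abs_of_pos ht]; ring)
    refine h.congr_of_eventuallyEq ?_
    filter_upwards [eventually_gt_nhds ht] with s hs
    simp [tAbs, abs_of_pos hs]

lemma contDiff_tAbs : ContDiff ℝ 1 tAbs := by
  rw [contDiff_one_iff_deriv]
  have hd : ∀ t, deriv tAbs t = 2 * |t| := fun t => (hasDerivAt_tAbs t).deriv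
  refine ⟨fun t => (hasDerivAt_tAbs t).differentiableAt, ?_⟩
  have : (deriv tAbs) = fun t => 2 * |t| := funext hd
  rw [this]
  exact continuous_const.mul continuous_abs

/-- `min t 0 ^ 2` as a `C¹` expression. -/
def mq (t : ℝ) : ℝ := (t ^ 2 - tAbs t) / 2

/-- `max t 0 ^ 2` as a `C¹` expression. -/
def Mq (t : ℝ) : ℝ := (t ^ 2 + tAbs t) / 2

lemma mq_of_nonneg {t : ℝ} (h : 0 ≤ t) : mq t = 0 := by
  simp [mq, tAbs, _root_.abs_of_nonneg h]; ring
lemma mq_of_nonpos {t : ℝ} (h : t ≤ 0) : mq t = t ^ 2 := by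
  simp [mq, tAbs, _root_.abs_of_nonpos h]; ring
lemma Mq_of_nonneg {t : ℝ} (h : 0 ≤ t) : Mq t = t ^ 2 := by
  simp [Mq, tAbs, _root_.abs_of_nonneg h]; ring
lemma Mq_of_nonpos {t : ℝ} (h : t ≤ 0) : Mq t = 0 := by
  simp [Mq, tAbs, _root_.abs_of_nonpos h]; ring

lemma contDiff_mq : ContDiff ℝ 1 mq :=
  (((contDiff_id.pow 2).sub contDiff_tAbs).div_const 2)
lemma contDiff_Mq : ContDiff ℝ 1 Mq :=
  (((contDiff_id.pow 2).add contDiff_tAbs).div_const 2)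

end SectorAux

noncomputable section SectorAux2

/-- The constant `e^{-iα}`. -/
def eCst (α : ℝ) : ℂ := Complex.exp (-(α : ℂ) * Complex.I)

lemma eCst_def (α : ℝ) : eCst α = (Real.cos α : ℂ) - (Real.sin α : ℂ) * Complex.I := by
  have h : -(α : ℂ) * Complex.I = ((-α : ℝ) : ℂ) * Complex.I := by push_cast; ring
  rw [eCst, h, Complex.exp_mul_I, ← Complex.ofReal_cos, ← Complex.ofReal_sin,
    Real.cos_neg, Real.sin_neg]
  push_cast; ring

/-- `s(z) = Im (z e^{-iα})`. -/
def sfn (α : ℝ) (z : ℂ) : ℝ := (z * eCst α).im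

lemma sfn_apply (α : ℝ) (z : ℂ) :
    sfn α z = z.im * Real.cos α - z.re * Real.sin α := by
  simp [sfn, eCst_def, Complex.mul_im, Complex.sub_re, Complex.sub_im, Complex.sin_ofReal_re, Complex.cos_ofReal_re]; ring

lemma keyId (α : ℝ) (z : ℂ) :
    Real.sin α * ((z ^ 2 * eCst α) * Complex.I).re = sfn α z ^ 2 - z.im ^ 2 := by
  simp only [sfn_apply, eCst_def, pow_two, Complex.mul_re, Complex.mul_im, Complex.sub_re,
    Complex.sub_im, Complex.ofReal_re, Complex.ofReal_im, Complex.I_re, Complex.I_im, Complex.sin_ofReal_re, Complex.cos_ofReal_re]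
  linear_combination (-(z.im * z.im) : ℝ) * Real.sin_sq_add_cos_sq α

end SectorAux2

noncomputable section SectorAux3

lemma clog_eq (z : ℂ) :
    Complex.log z = (Real.log (‖z‖) : ℂ) + (z.arg : ℂ) * Complex.I := by
  apply Complex.ext <;> simp [Complex.log_re, Complex.log_im, Complex.add_re, Complex.add_im]

/-- Rotating by `e^{iψ}` shifts the argument of the logarithm, provided a normalized
representative `τ` of `arg z + ψ` modulo `2π` is known. -/
lemma log_rot (z : ℂ) (hz : z ≠ 0) (ψ τ : ℝ) (hτ₁ : -π < τ) (hτ₂ : τ ≤ π)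
    (k : ℤ) (hk : ψ = τ - z.arg + k * (2 * π)) :
    Complex.log (z * Complex.exp ((ψ : ℂ) * Complex.I)) =
      (Real.log (‖z‖) : ℂ) + (τ : ℂ) * Complex.I := by
  have h1 : z * Complex.exp ((ψ : ℂ) * Complex.I) =
      (‖z‖ : ℂ) * Complex.exp ((τ : ℂ) * Complex.I) := by
    conv_lhs => rw [← Complex.norm_mul_exp_arg_mul_I z]
    rw [mul_assoc, ← Complex.exp_add]
    congr 1
    rw [hk]
    push_cast
    rw [show ((z.arg : ℂ) * Complex.I + ((τ : ℂ) - z.arg + k * (2 * π)) * Complex.I)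
        = (τ : ℂ) * Complex.I + (k : ℂ) * (2 * (π : ℂ) * Complex.I) by ring,
      Complex.exp_add, Complex.exp_int_mul_two_pi_mul_I, mul_one]
  rw [h1, Complex.exp_mul_I, ← Complex.ofReal_cos, ← Complex.ofReal_sin]
  have habs : (0:ℝ) < ‖z‖ := by
    exact norm_pos_iff.mpr hz
  have harg := Complex.arg_mul_cos_add_sin_mul_I habs (θ := τ) ⟨hτ₁, hτ₂⟩
  have habs2 : ‖((‖z‖ : ℂ) *
      ((Real.cos τ : ℂ) + (Real.sin τ : ℂ) * Complex.I))‖ = ‖z‖ := by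
    rw [norm_mul]
    have : (Real.cos τ : ℂ) + (Real.sin τ : ℂ) * Complex.I
        = Complex.exp ((τ:ℂ) * Complex.I) := by
      rw [Complex.exp_mul_I, ← Complex.ofReal_cos, ← Complex.ofReal_sin]
    rw [this, Complex.norm_exp]
    simp [Complex.norm_of_nonneg habs.le]
  rw [clog_eq]
  have harg' : ((‖z‖ : ℂ) * ((Real.cos τ : ℂ) + (Real.sin τ : ℂ) * Complex.I)).arg
      = τ := by
    have := harg
    push_cast at this ⊢
    convert this using 3
  rw [habs2, harg']

end SectorAux3

noncomputable section SectorAux4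

variable {α b₁ : ℝ} {z : ℂ}

lemma sfn_polar (α : ℝ) (z : ℂ) : sfn α z = ‖z‖ * Real.sin (z.arg - α) := by
  rw [sfn_apply, ← Complex.norm_mul_sin_arg z, ← Complex.norm_mul_cos_arg z, Real.sin_sub]
  ring

lemma logBranch_eq_two_pi (hα : 0 < α) (hα' : α < π) (hz : z ≠ 0) (h : z.arg < α) :
    logBranch α z = Complex.log z + ((2 * π : ℝ) : ℂ) * Complex.I := by
  have hcast : -(((α + π : ℝ) : ℂ)) * Complex.I = ((-(α + π) : ℝ) : ℂ) * Complex.I := by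
    push_cast; ring
  have hbound := Complex.neg_pi_lt_arg z
  have hrot := log_rot z hz (-(α + π)) (z.arg + π - α) (by linarith) (by linarith) (-1)
    (by push_cast; ring)
  rw [logBranch, hcast, hrot, clog_eq z]
  push_cast; ring

lemma logBranch_eq_log (hα : 0 < α) (hz : z ≠ 0) (h : α < z.arg) :
    logBranch α z = Complex.log z := by
  have hcast : -(((α + π : ℝ) : ℂ)) * Complex.I = ((-(α + π) : ℝ) : ℂ) * Complex.I := by
    push_cast; ring
  have hbound := Complex.arg_le_pi z
  have hrot := log_rot z hz (-(α + π)) (z.arg - α - π) (by linarith) (by linarith) 0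
    (by push_cast; ring)
  rw [logBranch, hcast, hrot, clog_eq z]
  push_cast; ring

lemma log_neg_upper {w : ℂ} (hre : w.re < 0) (him : 0 ≤ w.im) :
    Complex.log w = Complex.log (-w) + (π : ℂ) * Complex.I := by
  have hw : w ≠ 0 := fun h => by simp [h] at hre
  have hnw : -w ≠ 0 := neg_ne_zero.mpr hw
  have harg_np : (-w).arg ≤ 0 := by
    rcases lt_or_eq_of_le him with h | h
    · exact le_of_lt (Complex.arg_neg_iff.mpr (by simpa using h))
    · exact le_of_eq (Complex.arg_eq_zero_iff.mpr ⟨by simpa using hre.le, by simpa using h.symm⟩)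
  have hbound := Complex.neg_pi_lt_arg (-w)
  have hweq : w = (-w) * Complex.exp (((π : ℝ) : ℂ) * Complex.I) := by
    push_cast
    rw [Complex.exp_pi_mul_I]; ring
  have hrot := log_rot (-w) hnw π ((-w).arg + π) (by linarith) (by linarith) 0
    (by push_cast; ring)
  conv_lhs => rw [hweq]
  rw [hrot, clog_eq (-w)]
  push_cast; ring

lemma log_neg_lower {w : ℂ} (hre : w.re < 0) (him : w.im < 0) :
    Complex.log w = Complex.log (-w) - (π : ℂ) * Complex.I := by
  have hw : w ≠ 0 := fun h => by simp [h] at hre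
  have hnw : -w ≠ 0 := neg_ne_zero.mpr hw
  have harg_pos : 0 < (-w).arg := by
    have h1 : 0 ≤ (-w).arg := Complex.arg_nonneg_iff.mpr (by simpa using him.le)
    rcases lt_or_eq_of_le h1 with h | h
    · exact h
    · exfalso
      have := Complex.arg_eq_zero_iff.mp h.symm
      simp only [Complex.neg_im, neg_eq_zero] at this
      exact him.ne this.2
  have hbound := Complex.arg_le_pi (-w)
  have hweq : w = (-w) * Complex.exp (((π : ℝ) : ℂ) * Complex.I) := by
    push_cast
    rw [Complex.exp_pi_mul_I]; ring
  have hrot := log_rot (-w) hnw π ((-w).arg - π) (by linarith) (by linarith) 1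
    (by push_cast; ring)
  conv_lhs => rw [hweq]
  rw [hrot, clog_eq (-w)]
  push_cast; ring

lemma sectorOne_props (hα' : α < π) (hz : z ∈ sectorOne α) :
    z ≠ 0 ∧ 0 < z.arg ∧ z.arg < α := by
  obtain ⟨h0, h1, h2⟩ := hz
  unfold argTwoPi at h1 h2
  split_ifs at h1 h2 with h
  · exact ⟨h0, h1, h2⟩
  · exfalso
    have := Complex.neg_pi_lt_arg z
    linarith

lemma sectorTwo_props (hz : z ∈ sectorTwo α) :
    z ≠ 0 ∧ (α < z.arg ∨ z.arg < 0) := by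
  obtain ⟨h0, h1, h2⟩ := hz
  unfold argTwoPi at h1 h2
  split_ifs at h1 h2 with h
  · exact ⟨h0, Or.inl h1⟩
  · exact ⟨h0, Or.inr (not_le.mp h)⟩

lemma im_pos_of_arg (h1 : 0 < z.arg) (h2 : z.arg < π) : 0 < z.im := by
  have hz : z ≠ 0 := by
    intro h; rw [h, Complex.arg_zero] at h1; exact lt_irrefl 0 h1
  rw [← Complex.norm_mul_sin_arg z]
  exact mul_pos (norm_pos_iff.mpr hz) (Real.sin_pos_of_pos_of_lt_pi h1 h2)

lemma sfn_neg_of_arg_lt (hz : z ≠ 0) (h1 : -π < z.arg - α) (h2 : z.arg < α) :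
    sfn α z < 0 := by
  rw [sfn_polar]
  have : Real.sin (z.arg - α) < 0 := by
    apply Real.sin_neg_of_neg_of_neg_pi_lt (by linarith) h1
  exact mul_neg_of_pos_of_neg (norm_pos_iff.mpr hz) this

lemma sfn_pos_of_arg (hz : z ≠ 0) (h1 : α < z.arg) (h2 : z.arg - α < π) :
    0 < sfn α z := by
  rw [sfn_polar]
  exact mul_pos (norm_pos_iff.mpr hz)
    (Real.sin_pos_of_pos_of_lt_pi (by linarith) h2)

end SectorAux4

noncomputable section SectorAux5

variable {α b₁ : ℝ} {z : ℂ}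

/-- The constant `c₀ sin α / (2π)`. -/
def ccst (α b₁ : ℝ) : ℝ := (1 - b₁) * Real.sin α / (2 * π)

lemma ccst_two_pi (α b₁ : ℝ) : ccst α b₁ * (2 * π) = (1 - b₁) * Real.sin α := by
  rw [ccst]; field_simp

/-- The global `C¹` extension. -/
def Gg (α b₁ : ℝ) (z : ℂ) : ℝ :=
  z.im ^ 2 + (1 - b₁) * (mq z.im - mq (sfn α z))
    - ccst α b₁ * (z ^ 2 * eCst α * Complex.log z).re
    - (1 - b₁) * (if z.im < 0 then Mq (sfn α z) else 0)

lemma sq_rot (α : ℝ) (z : ℂ) :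
    (z * Complex.exp (-((α / 2 : ℝ) : ℂ) * Complex.I)) ^ 2 = z ^ 2 * eCst α := by
  have h : Complex.exp (-((α / 2 : ℝ) : ℂ) * Complex.I) ^ 2
      = Complex.exp (-(α : ℂ) * Complex.I) := by
    rw [sq, ← Complex.exp_add]; congr 1; push_cast; ring
  rw [mul_pow, h, eCst]

lemma logTerm_eq (α b₁ : ℝ) (z : ℂ) :
    logTerm α b₁ z = ccst α b₁ * (z ^ 2 * eCst α * logBranch α z).re := by
  rw [logTerm, sq_rot, ccst]

lemma re_mul_two_pi_I (w : ℂ) :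
    (w * (Complex.log z + ((2 * π : ℝ) : ℂ) * Complex.I)).re
      = (w * Complex.log z).re + 2 * π * (w * Complex.I).re := by
  have h : w * (Complex.log z + ((2 * π : ℝ) : ℂ) * Complex.I)
      = w * Complex.log z + ((2 * π : ℝ) : ℂ) * (w * Complex.I) := by ring
  rw [h, Complex.add_re, Complex.re_ofReal_mul]

lemma Gg_eq_sectorOne (hα : 0 < α) (hα' : α < π) (hz : z ∈ sectorOne α) :
    Gg α b₁ z = b₁ * z.im ^ 2 - logTerm α b₁ z := by
  obtain ⟨hz0, h1, h2⟩ := sectorOne_props hα' hz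
  have him : 0 < z.im := im_pos_of_arg h1 (h2.trans hα')
  have hs : sfn α z < 0 := sfn_neg_of_arg_lt hz0 (by linarith) h2
  have hlb := logBranch_eq_two_pi hα hα' hz0 h2
  rw [logTerm_eq, hlb, Gg, mq_of_nonneg him.le, mq_of_nonpos hs.le,
    if_neg (not_lt.mpr him.le), re_mul_two_pi_I]
  have hkey := keyId α z
  have h2pi := ccst_two_pi α b₁
  set A := (z ^ 2 * eCst α * Complex.log z).re
  set B := (z ^ 2 * eCst α * Complex.I).re
  linear_combination B * h2pi + (1 - b₁) * hkey

lemma Gg_eq_sectorTwo (hα : 0 < α) (hα' : α < π) (hz : z ∈ sectorTwo α) :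
    Gg α b₁ z = z.im ^ 2 - logTerm α b₁ z := by
  obtain ⟨hz0, hcase⟩ := sectorTwo_props hz
  rcases hcase with h | h
  · -- α < arg z ≤ π : upper part
    have harg_le := Complex.arg_le_pi z
    have him : 0 ≤ z.im := Complex.arg_nonneg_iff.mp (by linarith)
    have hs : 0 < sfn α z := sfn_pos_of_arg hz0 h (by linarith)
    have hlb := logBranch_eq_log hα hz0 h
    rw [logTerm_eq, hlb, Gg, mq_of_nonneg him, mq_of_nonneg hs.le,
      if_neg (not_lt.mpr him)]
    ring
  · -- arg z < 0 : lower part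
    have him : z.im < 0 := Complex.arg_neg_iff.mp h
    have hlb := logBranch_eq_two_pi hα hα' hz0 (h.trans hα)
    rw [logTerm_eq, hlb, Gg, mq_of_nonpos him.le, if_pos him, re_mul_two_pi_I]
    have hkey := keyId α z
    have h2pi := ccst_two_pi α b₁
    have hmM : mq (sfn α z) + Mq (sfn α z) = (sfn α z) ^ 2 := by
      rw [mq, Mq]; ring
    set A := (z ^ 2 * eCst α * Complex.log z).re
    set B := (z ^ 2 * eCst α * Complex.I).re
    linear_combination B * h2pi + (1 - b₁) * hkey - (1 - b₁) * hmM

end SectorAux5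

noncomputable section SectorAux6

variable {α b₁ : ℝ} {z : ℂ}

lemma re_mul_pi_I (w u : ℂ) :
    (w * (u + (π : ℂ) * Complex.I)).re = (w * u).re + π * (w * Complex.I).re := by
  have h : w * (u + (π : ℂ) * Complex.I) = w * u + ((π : ℝ) : ℂ) * (w * Complex.I) := by
    push_cast; ring
  rw [h, Complex.add_re, Complex.re_ofReal_mul]

lemma re_mul_sub_pi_I (w u : ℂ) :
    (w * (u - (π : ℂ) * Complex.I)).re = (w * u).re - π * (w * Complex.I).re := by
  have h : w * (u - (π : ℂ) * Complex.I) = w * u - ((π : ℝ) : ℂ) * (w * Complex.I) := by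
    push_cast; ring
  rw [h, Complex.sub_re, Complex.re_ofReal_mul]

/-- Near the negative real axis, the discontinuous part of `Gg` has a `C¹` closed form. -/
lemma bracket_eq (hre : z.re < 0) (hs : 0 < sfn α z) :
    ccst α b₁ * (z ^ 2 * eCst α * Complex.log z).re
      + (1 - b₁) * (if z.im < 0 then Mq (sfn α z) else 0)
    = ccst α b₁ * (z ^ 2 * eCst α * Complex.log (-z)).re
      + (1 - b₁) * (sfn α z) ^ 2 / 2 - (1 - b₁) / 2 * tAbs z.im := by
  have hkey := keyId α z
  have h2pi := ccst_two_pi α b₁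
  set B := (z ^ 2 * eCst α * Complex.I).re with hB
  rcases lt_or_ge z.im 0 with him | him
  · rw [if_pos him, log_neg_lower hre him, re_mul_sub_pi_I, Mq_of_nonneg hs.le]
    have htA : tAbs z.im = -(z.im ^ 2) := by
      rw [tAbs, abs_of_neg him]; ring
    rw [htA]
    linear_combination (-B / 2) * h2pi - ((1 - b₁) / 2) * hkey
  · rw [if_neg (not_lt.mpr him), log_neg_upper hre him, re_mul_pi_I]
    have htA : tAbs z.im = z.im ^ 2 := by
      rw [tAbs, _root_.abs_of_nonneg him]
      ring
    rw [htA]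
    linear_combination (B / 2) * h2pi + ((1 - b₁) / 2) * hkey

end SectorAux6

noncomputable section SectorAux7

variable {α b₁ : ℝ} {z : ℂ}

lemma contDiff_im1 : ContDiff ℝ 1 (fun w : ℂ => w.im) := Complex.imCLM.contDiff

lemma contDiff_sfn (α : ℝ) : ContDiff ℝ 1 (sfn α) :=
  Complex.imCLM.contDiff.comp (contDiff_id.mul contDiff_const)

lemma continuous_sfn (α : ℝ) : Continuous (sfn α) := (contDiff_sfn α).continuous

lemma contDiffAt_re_part {f : ℂ → ℂ} (hf : AnalyticAt ℂ f z) :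
    ContDiffAt ℝ 1 (fun w => (f w).re) z := by
  have h1 : ContDiffAt ℝ 1 f z := (hf.contDiffAt).restrict_scalars ℝ
  exact Complex.reCLM.contDiff.comp_contDiffAt z h1

lemma analyticAt_main (α : ℝ) (hz : z ∈ Complex.slitPlane) :
    AnalyticAt ℂ (fun w => w ^ 2 * eCst α * Complex.log w) z :=
  (((analyticAt_id).pow 2).mul analyticAt_const).mul (analyticAt_clog hz)

lemma analyticAt_main_neg (α : ℝ) (hz : -z ∈ Complex.slitPlane) :
    AnalyticAt ℂ (fun w => w ^ 2 * eCst α * Complex.log (-w)) z :=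
  (((analyticAt_id).pow 2).mul analyticAt_const).mul ((analyticAt_id).neg.clog hz)

/-- The `C¹` smooth part of `Gg`. -/
lemma contDiffAt_S (α b₁ : ℝ) (z : ℂ) :
    ContDiffAt ℝ 1 (fun w : ℂ => w.im ^ 2 + (1 - b₁) * (mq w.im - mq (sfn α w))) z := by
  apply ContDiffAt.add
  · exact (contDiff_im1.pow 2).contDiffAt
  · exact (contDiff_const.mul ((contDiff_mq.comp contDiff_im1).sub
      (contDiff_mq.comp (contDiff_sfn α)))).contDiffAt

/-- The possibly-singular part of `Gg`. -/
def Tt (α b₁ : ℝ) (w : ℂ) : ℝ :=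
  ccst α b₁ * (w ^ 2 * eCst α * Complex.log w).re
    + (1 - b₁) * (if w.im < 0 then Mq (sfn α w) else 0)

lemma Gg_eq_S_sub_T (α b₁ : ℝ) (w : ℂ) :
    Gg α b₁ w = (w.im ^ 2 + (1 - b₁) * (mq w.im - mq (sfn α w))) - Tt α b₁ w := by
  rw [Gg, Tt]; ring

lemma contDiffAt_T (hα : 0 < α) (hα' : α < π) (hz : z ≠ 0) :
    ContDiffAt ℝ 1 (Tt α b₁) z := by
  rcases lt_trichotomy z.im 0 with him | him | him
  · -- lower half plane
    have hslit : z ∈ Complex.slitPlane := Complex.mem_slitPlane_iff.mpr (Or.inr him.ne)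
    have hnice : ContDiffAt ℝ 1
        (fun w => ccst α b₁ * (w ^ 2 * eCst α * Complex.log w).re
          + (1 - b₁) * Mq (sfn α w)) z := by
      apply ContDiffAt.add
      · exact (contDiffAt_re_part (analyticAt_main α hslit)).const_smul (ccst α b₁)
      · exact (contDiff_const.mul (contDiff_Mq.comp (contDiff_sfn α))).contDiffAt
    apply hnice.congr_of_eventuallyEq
    filter_upwards [(isOpen_lt Complex.continuous_im continuous_const).eventually_mem him]
      with w hw
    rw [Tt, if_pos hw]
  · -- on the real axis
    rcases lt_trichotomy z.re 0 with hre | hre0 | hre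
    · -- negative real axis : use the bracket identity
      have hsz : 0 < sfn α z := by
        rw [sfn_apply, him]
        have : 0 < Real.sin α := Real.sin_pos_of_pos_of_lt_pi hα hα'
        nlinarith
      have hslit : -z ∈ Complex.slitPlane :=
        Complex.mem_slitPlane_iff.mpr (Or.inl (by simpa using hre))
      have hnice : ContDiffAt ℝ 1
          (fun w => ccst α b₁ * (w ^ 2 * eCst α * Complex.log (-w)).re
            + (1 - b₁) * (sfn α w) ^ 2 / 2 - (1 - b₁) / 2 * tAbs w.im) z := by
        apply ContDiffAt.sub
        · apply ContDiffAt.add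
          · exact (contDiffAt_re_part (analyticAt_main_neg α hslit)).const_smul (ccst α b₁)
          · exact ((contDiff_const.mul ((contDiff_sfn α).pow 2)).div_const 2).contDiffAt
        · exact (contDiff_const.mul (contDiff_tAbs.comp contDiff_im1)).contDiffAt
      apply hnice.congr_of_eventuallyEq
      have hU : IsOpen {w : ℂ | w.re < 0 ∧ 0 < sfn α w} :=
        (isOpen_lt Complex.continuous_re continuous_const).inter
          (isOpen_lt continuous_const (continuous_sfn α))
      filter_upwards [hU.eventually_mem ⟨hre, hsz⟩] with w hw
      rw [Tt, bracket_eq hw.1 hw.2]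
    · exact absurd (Complex.ext hre0 him) hz
    · -- positive real axis
      have hsz : sfn α z < 0 := by
        rw [sfn_apply, him]
        have : 0 < Real.sin α := Real.sin_pos_of_pos_of_lt_pi hα hα'
        nlinarith
      have hslit : z ∈ Complex.slitPlane := Complex.mem_slitPlane_iff.mpr (Or.inl hre)
      have hnice : ContDiffAt ℝ 1
          (fun w => ccst α b₁ * (w ^ 2 * eCst α * Complex.log w).re) z :=
        (contDiffAt_re_part (analyticAt_main α hslit)).const_smul (ccst α b₁)
      apply hnice.congr_of_eventuallyEq
      filter_upwards [(isOpen_lt (continuous_sfn α) continuous_const).eventually_mem hsz]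
        with w hw
      have : (if w.im < 0 then Mq (sfn α w) else 0) = 0 := by
        split_ifs with h
        · exact Mq_of_nonpos (le_of_lt hw)
        · rfl
      rw [Tt, this, mul_zero, add_zero]
  · -- upper half plane
    have hslit : z ∈ Complex.slitPlane := Complex.mem_slitPlane_iff.mpr (Or.inr him.ne')
    have hnice : ContDiffAt ℝ 1
        (fun w => ccst α b₁ * (w ^ 2 * eCst α * Complex.log w).re) z :=
      (contDiffAt_re_part (analyticAt_main α hslit)).const_smul (ccst α b₁)
    apply hnice.congr_of_eventuallyEq
    filter_upwards [(isOpen_lt continuous_const Complex.continuous_im).eventually_mem him]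
      with w hw
    rw [Tt, if_neg (not_lt.mpr (le_of_lt hw)), mul_zero, add_zero]

lemma contDiffAt_Gg (hα : 0 < α) (hα' : α < π) (hz : z ≠ 0) :
    ContDiffAt ℝ 1 (Gg α b₁) z := by
  have h := (contDiffAt_S α b₁ z).sub (contDiffAt_T (b₁ := b₁) hα hα' hz)
  exact h.congr_of_eventuallyEq (Filter.Eventually.of_forall fun w => Gg_eq_S_sub_T α b₁ w)

end SectorAux7

noncomputable section SectorAux8

variable {α b₁ : ℝ} {z : ℂ}

lemma itd2 {g g₁ : ℝ → ℝ} {c : ℝ} (h : ∀ᶠ t in 𝓝 (0:ℝ), HasDerivAt g (g₁ t) t)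
    (h' : HasDerivAt g₁ c 0) : iteratedDeriv 2 g 0 = c := by
  have h0 : deriv g =ᶠ[𝓝 (0:ℝ)] g₁ := h.mono fun t ht => ht.deriv
  have h2 : iteratedDeriv 2 g = deriv (deriv g) := by
    rw [iteratedDeriv_succ, iteratedDeriv_one]
  rw [h2, h0.deriv_eq, h'.deriv]

lemma tendsto_path (z δ : ℂ) :
    Filter.Tendsto (fun t : ℝ => z + (t:ℂ) * δ) (𝓝 0) (𝓝 z) := by
  have hc : Continuous fun t : ℝ => z + (t:ℂ) * δ :=
    continuous_const.add (Complex.continuous_ofReal.mul continuous_const)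
  simpa using hc.tendsto 0

lemma planeLap_congr {G₁ G₂ : ℂ → ℝ} (h : G₁ =ᶠ[𝓝 z] G₂) :
    planeLaplacian G₁ z = planeLaplacian G₂ z := by
  unfold planeLaplacian
  have t1 : Filter.Tendsto (fun t : ℝ => z + (t:ℂ)) (𝓝 0) (𝓝 z) := by
    have := tendsto_path z 1
    simpa using this
  have t2 := tendsto_path z Complex.I
  congr 1
  · exact Filter.EventuallyEq.iteratedDeriv_eq 2 (h.comp_tendsto t1)
  · exact Filter.EventuallyEq.iteratedDeriv_eq 2 (h.comp_tendsto t2)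

lemma path_im (z δ : ℂ) (t : ℝ) : (z + (t:ℂ) * δ).im = z.im + t * δ.im := by
  simp [Complex.add_im, Complex.mul_im]

lemma path_sfn (α : ℝ) (z δ : ℂ) (t : ℝ) :
    sfn α (z + (t:ℂ) * δ) = sfn α z + t * sfn α δ := by
  simp only [sfn, add_mul, Complex.add_im, mul_assoc]
  simp [Complex.mul_im]

lemma HasDerivAt.reComp {f : ℝ → ℂ} {d : ℂ} {t : ℝ} (h : HasDerivAt f d t) :
    HasDerivAt (fun s => (f s).re) d.re t := by
  have := (Complex.reCLM.hasFDerivAt.comp t h.hasFDerivAt).hasDerivAt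
  exact this.congr_deriv (by simp)

lemma hasDerivAt_affine (z δ : ℂ) (u : ℂ) :
    HasDerivAt (fun v : ℂ => z + v * δ) δ u := by
  have := ((hasDerivAt_id u).mul_const δ).const_add z
  simpa using this

lemma itd2_main (K1 K2 C : ℝ) (α : ℝ) (z δ : ℂ) (f df : ℂ → ℂ) (D : ℂ)
    (hf : ∀ᶠ w in 𝓝 z, HasDerivAt f (df w) w)
    (hdf : HasDerivAt df D z) :
    iteratedDeriv 2 (fun t : ℝ =>
        K1 * (z + (t:ℂ) * δ).im ^ 2 + K2 * sfn α (z + (t:ℂ) * δ) ^ 2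
          + C * (f (z + (t:ℂ) * δ)).re) 0
      = 2 * K1 * δ.im ^ 2 + 2 * K2 * sfn α δ ^ 2 + C * (D * δ * δ).re := by
  have hev : ∀ᶠ t : ℝ in 𝓝 0, HasDerivAt f (df (z + (t:ℂ)*δ)) (z + (t:ℂ)*δ) :=
    (tendsto_path z δ).eventually hf
  apply itd2 (g₁ := fun t => K1 * (2*(z.im + t*δ.im)*δ.im)
      + K2 * (2*(sfn α z + t*sfn α δ)*sfn α δ) + C * ((df (z + (t:ℂ)*δ)) * δ).re)
  · filter_upwards [hev] with t ht
    have hb : HasDerivAt (fun s : ℝ => z.im + s * δ.im) δ.im t := by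
      have := ((hasDerivAt_id t).mul_const δ.im).const_add z.im
      simpa using this
    have d1 : HasDerivAt (fun s : ℝ => K1 * (z + (s:ℂ)*δ).im ^ 2)
        (K1 * (2*(z.im + t*δ.im)*δ.im)) t := by
      have heq : (fun s : ℝ => K1 * (z + (s:ℂ)*δ).im ^ 2)
          = fun s => K1 * (z.im + s * δ.im) ^ 2 := by
        funext s; rw [path_im]
      rw [heq]
      have := (hb.pow 2).const_mul K1
      exact this.congr_deriv (by ring)
    have hbs : HasDerivAt (fun s : ℝ => sfn α z + s * sfn α δ) (sfn α δ) t := by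
      have := ((hasDerivAt_id t).mul_const (sfn α δ)).const_add (sfn α z)
      simpa using this
    have d2 : HasDerivAt (fun s : ℝ => K2 * sfn α (z + (s:ℂ)*δ) ^ 2)
        (K2 * (2*(sfn α z + t*sfn α δ)*sfn α δ)) t := by
      have heq : (fun s : ℝ => K2 * sfn α (z + (s:ℂ)*δ) ^ 2)
          = fun s => K2 * (sfn α z + s * sfn α δ) ^ 2 := by
        funext s; rw [path_sfn]
      rw [heq]
      have := (hbs.pow 2).const_mul K2
      exact this.congr_deriv (by ring)
    have d3 : HasDerivAt (fun s : ℝ => C * (f (z + (s:ℂ)*δ)).re)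
        (C * ((df (z + (t:ℂ)*δ)) * δ).re) t := by
      have hcomp : HasDerivAt (fun s : ℝ => f (z + (s:ℂ)*δ)) (df (z+(t:ℂ)*δ) * δ) t := by
        have h1 : HasDerivAt (f ∘ fun v : ℂ => z + v*δ) (df (z + (t:ℂ)*δ) * δ) ((t:ℝ):ℂ) :=
          HasDerivAt.comp_of_eq (hh₂ := ht) (hh := hasDerivAt_affine z δ ((t:ℝ):ℂ)) (hy := rfl)
        exact h1.comp_ofReal
      exact hcomp.reComp.const_mul C
    exact (d1.add d2).add d3
  · have hb0 : HasDerivAt (fun t : ℝ => K1 * (2*(z.im + t*δ.im)*δ.im))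
        (2*K1*δ.im^2) 0 := by
      have hb : HasDerivAt (fun s : ℝ => z.im + s * δ.im) δ.im 0 := by
        have := ((hasDerivAt_id (0:ℝ)).mul_const δ.im).const_add z.im
        simpa using this
      have := ((hb.const_mul 2).mul_const δ.im).const_mul K1
      exact this.congr_deriv (by ring)
    have hb1 : HasDerivAt (fun t : ℝ => K2 * (2*(sfn α z + t*sfn α δ)*sfn α δ))
        (2*K2*sfn α δ^2) 0 := by
      have hbs : HasDerivAt (fun s : ℝ => sfn α z + s * sfn α δ) (sfn α δ) 0 := by
        have := ((hasDerivAt_id (0:ℝ)).mul_const (sfn α δ)).const_add (sfn α z)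
        simpa using this
      have := ((hbs.const_mul 2).mul_const (sfn α δ)).const_mul K2
      exact this.congr_deriv (by ring)
    have hb2 : HasDerivAt (fun t : ℝ => C * ((df (z + (t:ℂ)*δ)) * δ).re)
        (C * (D * δ * δ).re) 0 := by
      have hdfz : HasDerivAt df D (z + ((0:ℝ):ℂ)*δ) := by
        have h0 : z + ((0:ℝ):ℂ)*δ = z := by simp
        rw [h0]; exact hdf
      have hcomp : HasDerivAt (fun s : ℝ => df (z + (s:ℂ)*δ)) (D * δ) 0 := by
        have h1 : HasDerivAt (df ∘ fun v : ℂ => z + v*δ) (D * δ) (((0:ℝ)):ℂ) :=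
          HasDerivAt.comp_of_eq (hh₂ := hdfz) (hh := hasDerivAt_affine z δ (((0:ℝ)):ℂ)) (hy := rfl)
        exact h1.comp_ofReal
      exact (hcomp.mul_const δ).reComp.const_mul C
    exact (hb0.add hb1).add hb2

lemma sfn_one (α : ℝ) : sfn α 1 = -Real.sin α := by
  simp [sfn, eCst_def, Complex.sin_ofReal_re, Complex.cos_ofReal_re]

lemma sfn_I (α : ℝ) : sfn α Complex.I = Real.cos α := by
  simp [sfn, eCst_def, Complex.sin_ofReal_re, Complex.cos_ofReal_re]

lemma lap_main (K1 K2 C : ℝ) (α : ℝ) (z : ℂ) (f df : ℂ → ℂ) (D : ℂ)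
    (hf : ∀ᶠ w in 𝓝 z, HasDerivAt f (df w) w) (hdf : HasDerivAt df D z) :
    planeLaplacian (fun w => K1 * w.im ^ 2 + K2 * sfn α w ^ 2 + C * (f w).re) z
      = 2 * K1 + 2 * K2 := by
  unfold planeLaplacian
  have h1 := itd2_main K1 K2 C α z 1 f df D hf hdf
  have h2 := itd2_main K1 K2 C α z Complex.I f df D hf hdf
  simp only [mul_one] at h1
  have hDI : (D * Complex.I * Complex.I).re = -(D.re) := by
    have h4 : D * Complex.I * Complex.I = -D := by
      rw [mul_assoc, Complex.I_mul_I]; ring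
    rw [h4, Complex.neg_re]
  rw [h1, h2, sfn_one, sfn_I, hDI]
  simp only [Complex.one_im, Complex.I_im]
  linear_combination (2*K2) * Real.sin_sq_add_cos_sq α

lemma deriv_pack (α : ℝ) {z : ℂ} {L : ℂ → ℂ}
    (hL : ∀ᶠ w in 𝓝 z, w ≠ 0 ∧ HasDerivAt L w⁻¹ w) :
    (∀ᶠ w in 𝓝 z, HasDerivAt (fun w => w^2*eCst α*L w) (2*w*eCst α*L w + w*eCst α) w)
    ∧ HasDerivAt (fun w => 2*w*eCst α*L w + w*eCst α) (2*eCst α*L z + 3*eCst α) z := by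
  constructor
  · filter_upwards [hL] with w hw
    obtain ⟨hw0, hl⟩ := hw
    have h := ((hasDerivAt_pow 2 w).mul_const (eCst α)).mul hl
    exact h.congr_deriv (by
      linear_combination (w * eCst α) * (mul_inv_cancel₀ hw0))
  · obtain ⟨hz0, hlz⟩ := hL.self_of_nhds
    have ha : HasDerivAt (fun w : ℂ => 2*w*eCst α) (2*eCst α) z := by
      have := ((hasDerivAt_id z).const_mul (2:ℂ)).mul_const (eCst α)
      simpa using this
    have hmul : HasDerivAt (fun w : ℂ => 2*w*eCst α*L w)
        ((2*eCst α)*L z + (2*z*eCst α)*z⁻¹) z := ha.mul hlz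
    have hid : HasDerivAt (fun w : ℂ => w*eCst α) (eCst α) z := by
      have := (hasDerivAt_id z).mul_const (eCst α)
      simpa using this
    have := hmul.add hid
    exact this.congr_deriv (by
      linear_combination (2 * eCst α) * (mul_inv_cancel₀ hz0))

lemma hL_log (hz : z ∈ Complex.slitPlane) :
    ∀ᶠ w in 𝓝 z, w ≠ 0 ∧ HasDerivAt Complex.log w⁻¹ w := by
  filter_upwards [Complex.isOpen_slitPlane.eventually_mem hz] with w hw
  exact ⟨Complex.slitPlane_ne_zero hw, Complex.hasDerivAt_log hw⟩

lemma hL_log_neg (hz : -z ∈ Complex.slitPlane) :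
    ∀ᶠ w in 𝓝 z, w ≠ 0 ∧ HasDerivAt (fun w => Complex.log (-w)) w⁻¹ w := by
  have hopen : IsOpen {w : ℂ | -w ∈ Complex.slitPlane} :=
    Complex.isOpen_slitPlane.preimage continuous_neg
  filter_upwards [hopen.eventually_mem hz] with w hw
  have hw0 : w ≠ 0 := by
    intro h
    rw [h] at hw
    simp only [Set.mem_setOf_eq, neg_zero] at hw
    exact Complex.slitPlane_ne_zero hw rfl
  have := ((hasDerivAt_id w).neg).clog hw
  refine ⟨hw0, ?_⟩
  exact this.congr_deriv (by simp)

end SectorAux8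

noncomputable section SectorAux9

variable {α b₁ : ℝ} {z : ℂ}

lemma lap_sectorOne (hα : 0 < α) (hα' : α < π) (hz : z ∈ sectorOne α) :
    planeLaplacian (Gg α b₁) z = 2 * b₁ := by
  obtain ⟨hz0, h1, h2⟩ := sectorOne_props hα' hz
  have him : 0 < z.im := im_pos_of_arg h1 (h2.trans hα')
  have hs : sfn α z < 0 := sfn_neg_of_arg_lt hz0 (by linarith) h2
  have hslit : z ∈ Complex.slitPlane := Complex.mem_slitPlane_iff.mpr (Or.inr him.ne')
  obtain ⟨hf, hdf⟩ := deriv_pack α (hL_log hslit)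
  have hloc : Gg α b₁ =ᶠ[𝓝 z] fun w => (1:ℝ) * w.im ^ 2 + (-(1 - b₁)) * sfn α w ^ 2
      + (-(ccst α b₁)) * (w ^ 2 * eCst α * Complex.log w).re := by
    have hU : IsOpen {w : ℂ | 0 < w.im ∧ sfn α w < 0} :=
      (isOpen_lt continuous_const Complex.continuous_im).inter
        (isOpen_lt (continuous_sfn α) continuous_const)
    filter_upwards [hU.eventually_mem ⟨him, hs⟩] with w hw
    rw [Gg, mq_of_nonneg hw.1.le, mq_of_nonpos hw.2.le, if_neg (not_lt.mpr hw.1.le)]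
    ring
  have hmain : planeLaplacian (fun w : ℂ => (1:ℝ) * w.im ^ 2 + (-(1 - b₁)) * sfn α w ^ 2
      + (-(ccst α b₁)) * (w ^ 2 * eCst α * Complex.log w).re) z
      = 2 * 1 + 2 * (-(1 - b₁)) :=
    lap_main 1 (-(1 - b₁)) (-(ccst α b₁)) α z _ _ _ hf hdf
  rw [planeLap_congr hloc, hmain]
  ring

lemma lap_sectorTwo (hα : 0 < α) (hα' : α < π) (hz : z ∈ sectorTwo α) :
    planeLaplacian (Gg α b₁) z = 2 := by
  obtain ⟨hz0, hcase⟩ := sectorTwo_props hz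
  rcases hcase with h | h
  · rcases lt_or_eq_of_le (Complex.arg_le_pi z) with hπ | hπ'
    · -- α < arg z < π
      have him : 0 < z.im := im_pos_of_arg (hα.trans h) hπ
      have hs : 0 < sfn α z := sfn_pos_of_arg hz0 h (by linarith)
      have hslit : z ∈ Complex.slitPlane := Complex.mem_slitPlane_iff.mpr (Or.inr him.ne')
      obtain ⟨hf, hdf⟩ := deriv_pack α (hL_log hslit)
      have hloc : Gg α b₁ =ᶠ[𝓝 z] fun w => (1:ℝ) * w.im ^ 2 + (0:ℝ) * sfn α w ^ 2
          + (-(ccst α b₁)) * (w ^ 2 * eCst α * Complex.log w).re := by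
        have hU : IsOpen {w : ℂ | 0 < w.im ∧ 0 < sfn α w} :=
          (isOpen_lt continuous_const Complex.continuous_im).inter
            (isOpen_lt continuous_const (continuous_sfn α))
        filter_upwards [hU.eventually_mem ⟨him, hs⟩] with w hw
        rw [Gg, mq_of_nonneg hw.1.le, mq_of_nonneg hw.2.le, if_neg (not_lt.mpr hw.1.le)]
        ring
      have hmain : planeLaplacian (fun w : ℂ => (1:ℝ) * w.im ^ 2 + (0:ℝ) * sfn α w ^ 2
          + (-(ccst α b₁)) * (w ^ 2 * eCst α * Complex.log w).re) z
          = 2 * 1 + 2 * 0 :=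
        lap_main 1 0 (-(ccst α b₁)) α z _ _ _ hf hdf
      rw [planeLap_congr hloc, hmain]
      ring
    · -- arg z = π : negative real axis
      have hπ : z.arg = π := hπ'
      obtain ⟨hre, him⟩ := Complex.arg_eq_pi_iff.mp hπ
      have hsz : 0 < sfn α z := by
        rw [sfn_apply, him]
        have : 0 < Real.sin α := Real.sin_pos_of_pos_of_lt_pi hα hα'
        nlinarith
      have hslit : -z ∈ Complex.slitPlane :=
        Complex.mem_slitPlane_iff.mpr (Or.inl (by simpa using hre))
      obtain ⟨hf, hdf⟩ := deriv_pack α (hL_log_neg hslit)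
      have hloc : Gg α b₁ =ᶠ[𝓝 z] fun w => (1 + (1 - b₁)/2) * w.im ^ 2
          + (-(1 - b₁)/2) * sfn α w ^ 2
          + (-(ccst α b₁)) * (w ^ 2 * eCst α * Complex.log (-w)).re := by
        have hU : IsOpen {w : ℂ | w.re < 0 ∧ 0 < sfn α w} :=
          (isOpen_lt Complex.continuous_re continuous_const).inter
            (isOpen_lt continuous_const (continuous_sfn α))
        filter_upwards [hU.eventually_mem ⟨hre, hsz⟩] with w hw
        rw [Gg_eq_S_sub_T, Tt, bracket_eq hw.1 hw.2, mq_of_nonneg hw.2.le, mq]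
        ring
      have hmain : planeLaplacian (fun w : ℂ => (1 + (1 - b₁)/2) * w.im ^ 2
          + (-(1 - b₁)/2) * sfn α w ^ 2
          + (-(ccst α b₁)) * (w ^ 2 * eCst α * Complex.log (-w)).re) z
          = 2 * (1 + (1 - b₁)/2) + 2 * (-(1 - b₁)/2) :=
        lap_main (1 + (1 - b₁)/2) (-(1 - b₁)/2) (-(ccst α b₁)) α z _ _ _ hf hdf
      rw [planeLap_congr hloc, hmain]
      ring
  · -- arg z < 0 : lower half plane
    have him : z.im < 0 := Complex.arg_neg_iff.mp h
    have hslit : z ∈ Complex.slitPlane := Complex.mem_slitPlane_iff.mpr (Or.inr him.ne)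
    obtain ⟨hf, hdf⟩ := deriv_pack α (hL_log hslit)
    have hloc : Gg α b₁ =ᶠ[𝓝 z] fun w => (1 + (1 - b₁)) * w.im ^ 2
        + (-(1 - b₁)) * sfn α w ^ 2
        + (-(ccst α b₁)) * (w ^ 2 * eCst α * Complex.log w).re := by
      filter_upwards [(isOpen_lt Complex.continuous_im continuous_const).eventually_mem him]
        with w hw
      rw [Gg, if_pos hw, mq_of_nonpos hw.le, mq, Mq]
      ring
    have hmain : planeLaplacian (fun w : ℂ => (1 + (1 - b₁)) * w.im ^ 2
        + (-(1 - b₁)) * sfn α w ^ 2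
        + (-(ccst α b₁)) * (w ^ 2 * eCst α * Complex.log w).re) z
        = 2 * (1 + (1 - b₁)) + 2 * (-(1 - b₁)) :=
      lap_main (1 + (1 - b₁)) (-(1 - b₁)) (-(ccst α b₁)) α z _ _ _ hf hdf
    rw [planeLap_congr hloc, hmain]
    ring

end SectorAux9

/-- Section 2.2: the function `F(z) = φ(z) − (c₀ sin α/(2π)) Re((z e^{−iα/2})² log_α z)`
(with `φ = b₁ (Im z)²` on `Ω₁`, `φ = (Im z)²` on `Ω₂`, `c₀ = 1 − b₁`) extends to a `C¹`
function on `ℂ ∖ {0}` which satisfies the Poisson equation `ΔF = 2b₁` on the open sector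
`Ω₁` and `ΔF = 2` on the open sector `Ω₂`. -/
theorem sector_potential_C1_and_Poisson
    (α b₁ : ℝ) (hα : 0 < α) (hα' : α < π) (hb₁ : b₁ < 0) :
    ∃ G : ℂ → ℝ,
      ContDiffOn ℝ 1 G {z : ℂ | z ≠ 0} ∧
      (∀ z ∈ sectorOne α, G z = b₁ * z.im ^ 2 - logTerm α b₁ z) ∧
      (∀ z ∈ sectorTwo α, G z = z.im ^ 2 - logTerm α b₁ z) ∧
      (∀ z ∈ sectorOne α, planeLaplacian G z = 2 * b₁) ∧
      (∀ z ∈ sectorTwo α, planeLaplacian G z = 2) := by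
  refine ⟨Gg α b₁, ?_, ?_, ?_, ?_, ?_⟩
  · intro z hz
    exact (contDiffAt_Gg (b₁ := b₁) hα hα' hz).contDiffWithinAt
  · intro z hz
    exact Gg_eq_sectorOne hα hα' hz
  · intro z hz
    exact Gg_eq_sectorTwo hα hα' hz
  · intro z hz
    exact lap_sectorOne hα hα' hz
  · intro z hz
    exact lap_sectorTwo hα hα' hz
end
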